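/- arXiv:math/0105235 — 7 statements merged into one kernel-verified Lean document; each statement's English description precedes it below -/
import Mathlib

section
/- Let n ≥ 2 and let a₁, …, aₙ be real numbers with a₁ = 1 and 0 ≤ aᵢ < 1 for 2 ≤ i ≤ n. Define the n×n real matrix T by Tᵢᵢ = aᵢ and Tᵢⱼ = (1 − aᵢ)/(n − 1) for i ≠ j, and set B = ((n−1)/n)·(I − T). Let p(x) = ∏_{i=1}^n (x − (1 − aᵢ)). Then the characteristic polynomial of B satisfies det(x·I − B) = (x/n)·p′(x). -/
/-!
With `b i = 1 - a i`, the matrix `B` is `diagonal b - (1/n) b 1ᵀ`, so `X I - B` is a diagonal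
matrix plus a rank-one matrix. The matrix determinant lemma gives
`det (X I - B) = ∏ (X - b i) + (1/n) ∑ b i ∏_{j ≠ i} (X - b j)`, and writing
`X = (X - b i) + b i` in each term of `X p' = ∑ X ∏_{j ≠ i} (X - b j)` shows that this is
`X p' / n`.
-/

open Polynomial Matrix Finset

namespace Matrix

theorem det_diagonal_add_vecMulVec_of_ne_zero {K ι : Type*} [Field K] [Fintype ι] [DecidableEq ι]
    {d : ι → K} (hd : ∀ i, d i ≠ 0) (u v : ι → K) :
    (diagonal d + vecMulVec u v).det = ∏ i, d i + ∑ i, u i * v i * ∏ j ∈ univ.erase i, d j := by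
  have hfactor : diagonal d + vecMulVec u v = diagonal d * (1 + vecMulVec (u / d) v) := by
    rw [Matrix.mul_add, Matrix.mul_one]
    congr 1
    ext i j
    simp only [diagonal_mul, vecMulVec_apply, Pi.div_apply]
    field_simp [hd i]
  rw [hfactor, det_mul, det_diagonal, vecMulVec_eq Unit, det_one_add_replicateCol_mul_replicateRow,
    mul_add, mul_one, dotProduct, mul_sum]
  congr 1
  refine sum_congr rfl fun i _ => ?_
  rw [← mul_prod_erase univ d (mem_univ i), Pi.div_apply]
  field_simp [hd i]

theorem det_diagonal_add_vecMulVec {R ι : Type*} [CommRing R] [IsDomain R] [Fintype ι]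
    [DecidableEq ι] {d : ι → R} (hd : ∀ i, d i ≠ 0) (u v : ι → R) :
    (diagonal d + vecMulVec u v).det = ∏ i, d i + ∑ i, u i * v i * ∏ j ∈ univ.erase i, d j := by
  let φ := algebraMap R (FractionRing R)
  apply IsFractionRing.injective R (FractionRing R)
  have hφ : φ.mapMatrix (diagonal d + vecMulVec u v) =
      diagonal (φ ∘ d) + vecMulVec (φ ∘ u) (φ ∘ v) := by
    ext i j
    simp [diagonal_apply, vecMulVec_apply, apply_ite φ]
  rw [RingHom.map_det, hφ, det_diagonal_add_vecMulVec_of_ne_zero]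
  · simp [φ, map_sum, map_prod]
  · simpa [φ] using hd

theorem charpoly_diagonal_sub_vecMulVec {R ι : Type*} [CommRing R] [IsDomain R] [Fintype ι]
    [DecidableEq ι] (b u v : ι → R) :
    (diagonal b - vecMulVec u v).charpoly =
      ∏ i, (X - C (b i)) + ∑ i, C (u i * v i) * ∏ j ∈ univ.erase i, (X - C (b j)) := by
  have hchar : charmatrix (diagonal b - vecMulVec u v) =
      diagonal (fun i => X - C (b i)) + vecMulVec (fun i => C (u i)) (fun i => C (v i)) := by
    ext i j : 1
    by_cases hij : i = j
    · subst hij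
      simp only [charmatrix_apply_eq, Matrix.sub_apply, Matrix.add_apply, diagonal_apply_eq,
        vecMulVec_apply, C_sub, C_mul]
      ring
    · simp [hij, vecMulVec_apply]
  rw [charpoly, hchar, det_diagonal_add_vecMulVec fun i => X_sub_C_ne_zero (b i)]
  simp only [C_mul]

end Matrix

namespace Polynomial

theorem X_mul_derivative_prod_X_sub_C {R ι : Type*} [CommRing R] [DecidableEq ι] (s : Finset ι)
    (b : ι → R) :
    X * derivative (∏ i ∈ s, (X - C (b i))) =
      #s • ∏ i ∈ s, (X - C (b i)) + ∑ i ∈ s, C (b i) * ∏ j ∈ s.erase i, (X - C (b j)) := by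
  rw [derivative_prod_finset, mul_sum, ← sum_const, ← sum_add_distrib]
  refine sum_congr rfl fun i hi => ?_
  rw [derivative_X_sub_C, mul_one, ← mul_prod_erase s _ hi]
  ring

end Polynomial

/-- **Lemma (charpoly of the learning matrix).**
Let `n ≥ 2`, `a 0 = 1`, `0 ≤ a i < 1` for `i ≠ 0`.  Define the `n × n` matrix `T` by
`T i i = a i` and `T i j = (1 - a i)/(n - 1)` for `i ≠ j`, and set
`B = ((n-1)/n) • (I - T)`.  With `p x = ∏ i (x - (1 - a i))`, the characteristic
polynomial of `B` equals `(x/n) * p'(x)`. -/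
theorem charpoly_of_learning_matrix (n : ℕ) (hn : 2 ≤ n) (a : Fin n → ℝ)
    (T : Matrix (Fin n) (Fin n) ℝ)
    (hT : ∀ i j : Fin n, T i j = if i = j then a i else (1 - a i) / (n - 1))
    (B : Matrix (Fin n) (Fin n) ℝ)
    (hB : B = (((n : ℝ) - 1) / n) • ((1 : Matrix (Fin n) (Fin n) ℝ) - T))
    (p : Polynomial ℝ)
    (hp : p = ∏ i : Fin n, (X - C (1 - a i))) :
    B.charpoly = C (1 / (n : ℝ)) * X * derivative p := by
  set b : Fin n → ℝ := fun i => 1 - a i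
  have hn' : (2 : ℝ) ≤ n := by exact_mod_cast hn
  have hB_eq : B = diagonal b - vecMulVec (fun i => b i / n) 1 := by
    ext i j
    rw [hB, Matrix.smul_apply, Matrix.sub_apply, hT, Matrix.sub_apply, vecMulVec_apply,
      Pi.one_apply]
    by_cases hij : i = j
    · subst hij
      simp only [one_apply_eq, if_true, diagonal_apply_eq, smul_eq_mul, b]
      field_simp
    · simp only [one_apply_ne hij, if_neg hij, diagonal_apply_ne _ hij, smul_eq_mul, b]
      field_simp [show (n : ℝ) - 1 ≠ 0 by linarith]
      ring
  have hCn : C (1 / (n : ℝ)) * (n : ℝ[X]) = 1 := by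
    rw [← map_natCast C, ← C_mul, one_div_mul_cancel (by linarith), C_1]
  rw [hB_eq, charpoly_diagonal_sub_vecMulVec, hp, mul_assoc, X_mul_derivative_prod_X_sub_C,
    card_univ, Fintype.card_fin, nsmul_eq_mul, mul_add, ← mul_assoc, hCn, one_mul, mul_sum]
  refine congrArg _ (sum_congr rfl fun i _ => ?_)
  rw [Pi.one_apply, mul_one, ← mul_assoc, ← C_mul, one_div_mul_eq_div]
end

section
/- Let n ≥ 2 and let a₁, …, aₙ be real numbers with a₁ = 1 and 0 ≤ aᵢ < 1 for 2 ≤ i ≤ n. Define the n×n real matrix T by Tᵢᵢ = aᵢ and Tᵢⱼ = (1 − aᵢ)/(n − 1) for i ≠ j, and let p(x) = ∏_{i=1}^n (x − (1 − aᵢ)). Then the multiset of eigenvalues of T is exactly {1 − (n/(n−1))·μ : μ a root of x·p′(x), counted with multiplicity}; in particular, if the numbers 1 − a₂, …, 1 − aₙ are distinct, then the second largest eigenvalue λ* of T (all eigenvalues of T being real) satisfies λ* = 1 − (n/(n−1))·μ*, where μ* is the smallest root of p′(x). -/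
/-!
Write `c i = 1 - a i`, `t = 1/(n-1)` and `s = n t`. Then `T` is the diagonal matrix with entries
`1 - s c i` plus the rank-one matrix with constant rows `t c i`, so the matrix determinant lemma
gives `χ_T = ∏ (X - d i) - ∑ t c i ∏_{j ≠ i} (X - d j)` with `d i = 1 - s c i`. Substituting
`X = 1 - s μ` turns each factor `X - d i` into `-s (μ - c i)`, and
`∑ c i ∏_{j ≠ i} (μ - c j) = μ p'(μ) - n p(μ)`; because `s = n t` the `p`-terms cancel and
`χ_T (1 - s μ)` is a nonzero multiple of `μ p'(μ)`. The root `μ = 0` gives the eigenvalue `1`, and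
`μ ↦ 1 - s μ` is decreasing, so the largest of the remaining eigenvalues comes from the smallest
root of `p'`.
-/

open Polynomial Matrix Finset

theorem Matrix.det_diagonal_add_replicateCol_mul_replicateRow {K m : Type*} [Field K] [Fintype m]
    [DecidableEq m] {u : m → K} (hu : ∀ i, u i ≠ 0) (v w : m → K) :
    (diagonal u + replicateCol Unit v * replicateRow Unit w).det =
      ∏ i, u i + ∑ i, v i * w i * ∏ j ∈ univ.erase i, u j := by
  have hfactor : diagonal u + replicateCol Unit v * replicateRow Unit w =
      diagonal u * (1 + replicateCol Unit (fun i => (u i)⁻¹ * v i) * replicateRow Unit w) := by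
    rw [Matrix.mul_add, Matrix.mul_one, ← Matrix.mul_assoc]
    congr 2
    ext i j
    simp [← mul_assoc, mul_inv_cancel₀ (hu i)]
  rw [hfactor, det_mul, det_diagonal, det_one_add_replicateCol_mul_replicateRow, dotProduct,
    mul_add, mul_one, mul_sum]
  congr 1
  refine sum_congr rfl fun i _ => ?_
  rw [← mul_prod_erase univ u (mem_univ i)]
  field_simp [hu i]

theorem Matrix.det_diagonal_add_replicateCol_mul_replicateRow_of_isDomain {R m : Type*} [CommRing R]
    [IsDomain R] [Fintype m] [DecidableEq m] {u : m → R} (hu : ∀ i, u i ≠ 0) (v w : m → R) :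
    (diagonal u + replicateCol Unit v * replicateRow Unit w).det =
      ∏ i, u i + ∑ i, v i * w i * ∏ j ∈ univ.erase i, u j := by
  let f := algebraMap R (FractionRing R)
  have hf : Function.Injective f := IsFractionRing.injective R (FractionRing R)
  apply hf
  have hmap : (diagonal u + replicateCol Unit v * replicateRow Unit w).map f =
      diagonal (fun i => f (u i)) +
        replicateCol Unit (fun i => f (v i)) * replicateRow Unit (fun i => f (w i)) := by
    ext i j
    by_cases hij : i = j <;> simp [hij, Matrix.mul_apply]
  rw [RingHom.map_det, RingHom.mapMatrix_apply, hmap,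
    det_diagonal_add_replicateCol_mul_replicateRow fun i => (map_ne_zero_iff f hf).2 (hu i)]
  simp

theorem Matrix.charpoly_diagonal_add_replicateCol_mul_replicateRow {R m : Type*} [CommRing R]
    [IsDomain R] [Fintype m] [DecidableEq m] (d v w : m → R) :
    (diagonal d + replicateCol Unit v * replicateRow Unit w).charpoly =
      ∏ i, (X - C (d i)) - ∑ i, C (v i * w i) * ∏ j ∈ univ.erase i, (X - C (d j)) := by
  have hcharmatrix : charmatrix (diagonal d + replicateCol Unit v * replicateRow Unit w) =
      diagonal (fun i => X - C (d i)) +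
        replicateCol Unit (fun i => -C (v i)) * replicateRow Unit (fun i => C (w i)) := by
    ext i j : 1
    by_cases hij : i = j
    · subst hij
      simp [Matrix.mul_apply]
      ring
    · simp [hij, Matrix.mul_apply]
  rw [charpoly, hcharmatrix,
    det_diagonal_add_replicateCol_mul_replicateRow_of_isDomain fun i => X_sub_C_ne_zero (d i)]
  simp [sub_eq_add_neg]

theorem Polynomial.sum_C_mul_prod_erase_X_sub_C {R ι : Type*} [CommRing R] [DecidableEq ι]
    (s : Finset ι) (c : ι → R) :
    ∑ i ∈ s, C (c i) * ∏ j ∈ s.erase i, (X - C (c j)) =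
      X * derivative (∏ i ∈ s, (X - C (c i))) - #s • ∏ i ∈ s, (X - C (c i)) := by
  simp only [derivative_prod_finset, derivative_sub, derivative_X, derivative_C, sub_zero,
    mul_one, mul_sum, ← sum_const, ← sum_sub_distrib]
  refine sum_congr rfl fun i hi => ?_
  rw [← mul_prod_erase s _ hi]
  ring

theorem Polynomial.prod_X_sub_C_comp_C_mul_X_add_C {R ι : Type*} [CommRing R] (s : Finset ι)
    (c : ι → R) (a b : R) :
    (∏ i ∈ s, (X - C (a * c i + b))).comp (C a * X + C b) = C (a ^ #s) * ∏ i ∈ s, (X - C (c i)) := by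
  have hfactor : ∀ i ∈ s, (X - C (a * c i + b)).comp (C a * X + C b) = C a * (X - C (c i)) := by
    intro i _
    simp only [sub_comp, X_comp, C_comp]
    rw [C_add, C_mul]
    ring
  rw [prod_comp, prod_congr rfl hfactor, prod_mul_distrib, prod_const, C_pow]

theorem Matrix.charpoly_comp_eq_C_mul_X_mul_derivative {R ι : Type*} [CommRing R] [IsDomain R]
    [Fintype ι] [DecidableEq ι] [Nonempty ι] (M : Matrix ι ι R) (c : ι → R) {t : R}
    (hM : ∀ i j, M i j = if i = j then 1 - (Fintype.card ι - 1) * t * c i else t * c i) :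
    M.charpoly.comp (C (-(Fintype.card ι * t)) * X + C 1) =
      C (-(-(Fintype.card ι * t)) ^ (Fintype.card ι - 1) * t) *
        (X * derivative (∏ i, (X - C (c i)))) := by
  obtain ⟨k, hk⟩ : ∃ k, Fintype.card ι = k + 1 :=
    Nat.exists_eq_succ_of_ne_zero Fintype.card_ne_zero
  set s : R := Fintype.card ι * t
  have hM' : M = diagonal (fun i => -s * c i + 1) +
      replicateCol Unit (fun i => t * c i) * replicateRow Unit (fun _ : ι => (1 : R)) := by
    ext i j
    by_cases hij : i = j
    · subst hij
      simp [hM, s, Matrix.mul_apply]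
      ring
    · simp [hM, hij, Matrix.mul_apply]
  have hsum : ∀ i ∈ univ, ((C (t * c i * 1) * ∏ j ∈ univ.erase i, (X - C (-s * c j + 1)))).comp
      (C (-s) * X + C 1) = C ((-s) ^ k * t) * (C (c i) * ∏ j ∈ univ.erase i, (X - C (c j))) := by
    intro i hi
    rw [mul_comp, C_comp, prod_X_sub_C_comp_C_mul_X_add_C, card_erase_of_mem hi, card_univ, hk,
      Nat.add_sub_cancel, mul_one, C_mul, C_mul]
    ring
  rw [hM', charpoly_diagonal_add_replicateCol_mul_replicateRow, sub_comp, Polynomial.sum_comp,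
    sum_congr rfl hsum, ← mul_sum, sum_C_mul_prod_erase_X_sub_C, prod_X_sub_C_comp_C_mul_X_add_C]
  simp only [card_univ, hk, Nat.add_sub_cancel, s, nsmul_eq_mul, C_mul, C_neg, C_pow, pow_succ,
    map_natCast]
  ring

theorem Matrix.roots_charpoly_eq_map_roots_X_mul_derivative {K ι : Type*} [Field K] [Fintype ι]
    [DecidableEq ι] [Nonempty ι] (M : Matrix ι ι K) (c : ι → K) {t : K}
    (hM : ∀ i j, M i j = if i = j then 1 - (Fintype.card ι - 1) * t * c i else t * c i)
    (ht : (Fintype.card ι : K) * t ≠ 0) :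
    M.charpoly.roots = (X * derivative (∏ i, (X - C (c i)))).roots.map
      (fun μ => 1 - Fintype.card ι * t * μ) := by
  have hs : -((Fintype.card ι : K) * t) ≠ 0 := neg_ne_zero.2 ht
  have hcoeff : -(-((Fintype.card ι : K) * t)) ^ (Fintype.card ι - 1) * t ≠ 0 :=
    mul_ne_zero (neg_ne_zero.2 (pow_ne_zero _ hs)) (right_ne_zero_of_mul ht)
  rw [← map_roots_comp_C_mul_X_add_C M.charpoly _ 1 hs.isUnit,
    M.charpoly_comp_eq_C_mul_X_mul_derivative c hM, roots_C_mul _ hcoeff]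
  exact Multiset.map_congr rfl fun μ _ => by ring

theorem Polynomial.roots_X_mul {R : Type*} [CommRing R] [IsDomain R] {q : R[X]} (hq : q ≠ 0) :
    (X * q).roots = 0 ::ₘ q.roots := by
  rw [roots_mul (mul_ne_zero X_ne_zero hq), roots_X, Multiset.singleton_add]

theorem Antitone.isGreatest_multiset_map {α β : Type*} [Preorder α] [Preorder β] {f : α → β}
    (hf : Antitone f) {S : Multiset α} {m : α} (hm : IsLeast {x | x ∈ S} m) :
    IsGreatest {y | y ∈ S.map f} (f m) := by
  refine ⟨Multiset.mem_map_of_mem f hm.1, fun y hy => ?_⟩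
  obtain ⟨x, hx, rfl⟩ := Multiset.mem_map.1 hy
  exact hf (hm.2 hx)

/-- **Eigenvalues of the memoryless-learner transition matrix.**
The multiset of eigenvalues of `T` (roots of its characteristic polynomial, with
multiplicity) is the image of the multiset of roots of `x * p'(x)` under
`μ ↦ 1 - (n/(n-1)) μ`; and if the numbers `1 - a i` (`i ≠ 0`) are distinct, the
second largest eigenvalue `λ*` of `T` satisfies `λ* = 1 - (n/(n-1)) μ*`, where
`μ*` is the smallest root of `p'`. -/
theorem eigenvalues_of_learning_matrix (n : ℕ) (hn : 2 ≤ n) (a : Fin n → ℝ)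
    (T : Matrix (Fin n) (Fin n) ℝ)
    (hT : ∀ i j : Fin n, T i j = if i = j then a i else (1 - a i) / (n - 1))
    (p : Polynomial ℝ)
    (hp : p = ∏ i : Fin n, (X - C (1 - a i))) :
    T.charpoly.roots = (X * derivative p).roots.map (fun μ => 1 - ((n : ℝ) / (n - 1)) * μ)
    ∧
    (Function.Injective (fun i : Fin n => (1 - a i)) →
      ∀ μstar : ℝ, (μstar ∈ (derivative p).roots ∧ ∀ μ ∈ (derivative p).roots, μstar ≤ μ) →
      ∀ lamstar : ℝ,
        (lamstar ∈ T.charpoly.roots.erase 1 ∧ ∀ lam ∈ T.charpoly.roots.erase 1, lam ≤ lamstar) →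
        lamstar = 1 - ((n : ℝ) / (n - 1)) * μstar) := by
  have : NeZero n := ⟨by omega⟩
  have hn1 : 0 < (n : ℝ) - 1 := by
    have : (2 : ℝ) ≤ n := by exact_mod_cast hn
    linarith
  have hT' : ∀ i j, T i j = if i = j then 1 - (Fintype.card (Fin n) - 1) * ((n : ℝ) - 1)⁻¹ *
      (1 - a i) else ((n : ℝ) - 1)⁻¹ * (1 - a i) := by
    intro i j
    rw [hT, Fintype.card_fin]
    split_ifs
    · field_simp; ring
    · field_simp
  have hroots := T.roots_charpoly_eq_map_roots_X_mul_derivative (fun i => 1 - a i) hT'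
    (by rw [Fintype.card_fin, ← div_eq_mul_inv]; exact (div_pos (by linarith) hn1).ne')
  rw [Fintype.card_fin, ← hp, ← div_eq_mul_inv] at hroots
  refine ⟨hroots, fun _ μstar hμ lamstar hl => ?_⟩
  have hp' : derivative p ≠ 0 := derivative_ne_zero.2 (by
    rw [hp, natDegree_finsetProd_X_sub_C_eq_card, card_univ, Fintype.card_fin]; omega)
  have hf : Antitone fun μ : ℝ => 1 - ((n : ℝ) / (n - 1)) * μ := fun x y hxy =>
    sub_le_sub_left (mul_le_mul_of_nonneg_left hxy (by positivity)) 1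
  rw [hroots, roots_X_mul hp', Multiset.map_cons, mul_zero, sub_zero,
    Multiset.erase_cons_head] at hl
  exact ((hf.isGreatest_multiset_map hμ).unique hl).symm
end

section
/- Let n ≥ 2 and let 0 = x₁ < x₂ < ⋯ < xₙ be real numbers, and set p(x) = ∏_{i=1}^n (x − xᵢ). Let μ* denote the smallest root of the derivative p′(x), and let H = (n−1)/(∑_{i=2}^n 1/xᵢ) be the harmonic mean of x₂, …, xₙ. Then (1/2)·H ≤ (n−1)·μ* ≤ H. -/
/-!
At a critical point `μ` of `p = ∏ (X - xᵢ)` (never a root, the roots being simple),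
`p'/p = ∑ 1/(μ - xᵢ)` vanishes; with `x₁ = 0` this reads `1/μ = ∑_{i ≥ 2} 1/(xᵢ - μ)`.
Rolle's theorem puts the smallest critical point in `(0, x₂)`, so every term is positive.
Comparing `1/(xᵢ - μ)` with `1/xᵢ` gives `1/μ ≥ ∑ 1/xᵢ`; and since each term is at most the
sum `1/μ`, we get `xᵢ ≥ 2μ`, hence `1/(xᵢ - μ) ≤ 2/xᵢ` and `1/μ ≤ 2 ∑ 1/xᵢ`.
-/

open Polynomial Finset

namespace Polynomial

theorem exists_isRoot_derivative_mem_Ioo {p : ℝ[X]} {a b : ℝ} (hab : a < b)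
    (ha : p.IsRoot a) (hb : p.IsRoot b) : ∃ c ∈ Set.Ioo a b, (derivative p).IsRoot c := by
  obtain ⟨c, hc, hc'⟩ := exists_deriv_eq_zero hab p.continuousOn (ha.trans hb.symm)
  exact ⟨c, hc, by rwa [IsRoot, ← p.deriv]⟩

section Field

variable {K ι : Type*} [Field K] [Fintype ι] [DecidableEq ι] {x : ι → K}

theorem eval_derivative_prod_X_sub_C (t : K) :
    eval t (derivative (∏ i, (X - C (x i)))) = ∑ i, ∏ j ∈ univ.erase i, (t - x j) := by
  simp [derivative_prod_finset, eval_finsetSum, eval_prod]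

theorem eval_derivative_prod_X_sub_C_eq_mul_sum_inv {t : K} (ht : ∀ i, t ≠ x i) :
    eval t (derivative (∏ i, (X - C (x i)))) = (∏ i, (t - x i)) * ∑ i, (t - x i)⁻¹ := by
  rw [eval_derivative_prod_X_sub_C, mul_sum]
  refine sum_congr rfl fun i _ => ?_
  rw [eq_mul_inv_iff_mul_eq₀ (sub_ne_zero.2 (ht i))]
  exact prod_erase_mul _ _ (mem_univ i)

theorem eval_derivative_prod_X_sub_C_self_ne_zero (hx : Function.Injective x) (i : ι) :
    eval (x i) (derivative (∏ i, (X - C (x i)))) ≠ 0 := by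
  rw [eval_derivative_prod_X_sub_C, sum_eq_single i]
  · exact prod_ne_zero_iff.2 fun j hj => sub_ne_zero.2 (hx.ne (ne_of_mem_erase hj).symm)
  · exact fun k _ hki => prod_eq_zero (mem_erase.2 ⟨Ne.symm hki, mem_univ i⟩) (sub_self _)
  · exact fun h => absurd (mem_univ i) h

theorem sum_inv_sub_eq_zero_of_isRoot_derivative (hx : Function.Injective x) {t : K}
    (ht : (derivative (∏ i, (X - C (x i)))).IsRoot t) : ∑ i, (t - x i)⁻¹ = 0 := by
  have hne : ∀ i, t ≠ x i := by
    rintro i rfl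
    exact eval_derivative_prod_X_sub_C_self_ne_zero hx i ht
  rw [IsRoot, eval_derivative_prod_X_sub_C_eq_mul_sum_inv hne] at ht
  exact (mul_eq_zero.1 ht).resolve_left (prod_ne_zero_iff.2 fun i _ => sub_ne_zero.2 (hne i))

end Field

end Polynomial

theorem inv_eq_sum_erase_inv_sub_of_sum_inv_sub_eq_zero {K ι : Type*} [Field K] [Fintype ι]
    [DecidableEq ι] {x : ι → K} {t : K} {i₀ : ι} (hx : x i₀ = 0) (h : ∑ i, (t - x i)⁻¹ = 0) :
    t⁻¹ = ∑ i ∈ univ.erase i₀, (x i - t)⁻¹ := by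
  rw [← add_sum_erase _ _ (mem_univ i₀), hx, sub_zero, add_eq_zero_iff_eq_neg] at h
  rw [h, ← sum_neg_distrib]
  exact sum_congr rfl fun i _ => by rw [← inv_neg, neg_sub]

section OrderedField

variable {K ι : Type*} [Field K] [LinearOrder K] [IsStrictOrderedRing K]

theorem pos_of_sum_inv_sub_eq_zero [Fintype ι] {x : ι → K} {t : K} (hx : ∀ i, 0 ≤ x i) {j : ι}
    (hj : 0 < x j) (h : ∑ i, (t - x i)⁻¹ = 0) : 0 < t := by
  by_contra! ht
  -- a term with `x i = t = 0` is the junk value `0⁻¹ = 0`; the `j` term is negative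
  refine (sum_neg' (fun i _ => inv_nonpos.2 ?_) ⟨j, mem_univ _, ?_⟩).ne h
  · linarith [hx i]
  · exact inv_lt_zero.2 (by linarith)

variable {s : Finset ι} {y : ι → K} {μ : K}

theorem le_inv_sum_inv_of_inv_eq_sum_inv_sub (hμ : 0 < μ) (hy : ∀ i ∈ s, μ < y i)
    (h : μ⁻¹ = ∑ i ∈ s, (y i - μ)⁻¹) : μ ≤ (∑ i ∈ s, (y i)⁻¹)⁻¹ := by
  have hle : ∑ i ∈ s, (y i)⁻¹ ≤ μ⁻¹ :=
    h ▸ sum_le_sum fun i hi => inv_anti₀ (sub_pos.2 (hy i hi)) (by linarith)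
  have hs : s.Nonempty := nonempty_of_sum_ne_zero (h ▸ (inv_pos.2 hμ).ne')
  have hpos : 0 < ∑ i ∈ s, (y i)⁻¹ :=
    sum_pos (fun i hi => inv_pos.2 (hμ.trans (hy i hi))) hs
  exact le_inv_of_le_inv₀ hpos hle

theorem inv_two_mul_sum_inv_le_of_inv_eq_sum_inv_sub (hμ : 0 < μ) (hy : ∀ i ∈ s, μ < y i)
    (h : μ⁻¹ = ∑ i ∈ s, (y i - μ)⁻¹) : (2 * ∑ i ∈ s, (y i)⁻¹)⁻¹ ≤ μ := by
  have hterm : ∀ i ∈ s, (y i - μ)⁻¹ ≤ 2 * (y i)⁻¹ := by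
    intro i hi
    have hsingle : (y i - μ)⁻¹ ≤ μ⁻¹ :=
      h ▸ single_le_sum (fun j hj => (inv_pos.2 (sub_pos.2 (hy j hj))).le) hi
    have h2μ : μ ≤ y i - μ := (inv_le_inv₀ (sub_pos.2 (hy i hi)) hμ).1 hsingle
    calc (y i - μ)⁻¹ ≤ (y i / 2)⁻¹ := inv_anti₀ (by linarith) (by linarith)
      _ = 2 * (y i)⁻¹ := by rw [inv_div, div_eq_mul_inv]
  have hle : μ⁻¹ ≤ 2 * ∑ i ∈ s, (y i)⁻¹ := by
    rw [h, mul_sum]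
    exact sum_le_sum hterm
  exact inv_le_of_inv_le₀ hμ hle

end OrderedField

/-- **Theorem (smallest critical point vs. harmonic mean).**
Let `0 = x₁ < x₂ < ⋯ < xₙ`, `p(x) = ∏ᵢ (x - xᵢ)`, `μ*` the smallest root of `p'`,
and `H` the harmonic mean of `x₂, …, xₙ`.  Then `H/2 ≤ (n-1) μ* ≤ H`. -/
theorem smallest_root_of_derivative_vs_harmonic_mean (n : ℕ) (hn : 2 ≤ n)
    (x : Fin n → ℝ) (hmono : StrictMono x) (hx0 : x ⟨0, by omega⟩ = 0)
    (p : Polynomial ℝ) (hp : p = ∏ i : Fin n, (X - C (x i)))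
    (μstar : ℝ)
    (hμ : μstar ∈ (derivative p).roots ∧ ∀ μ ∈ (derivative p).roots, μstar ≤ μ)
    (H : ℝ)
    (hH : H = ((n : ℝ) - 1) / (∑ i ∈ Finset.univ.erase ⟨0, by omega⟩, (x i)⁻¹)) :
    (1 / 2) * H ≤ ((n : ℝ) - 1) * μstar ∧ ((n : ℝ) - 1) * μstar ≤ H := by
  set i₀ : Fin n := ⟨0, by omega⟩
  set i₁ : Fin n := ⟨1, by omega⟩
  obtain ⟨hp', hroot⟩ := mem_roots'.1 hμ.1
  have hsum := sum_inv_sub_eq_zero_of_isRoot_derivative hmono.injective (hp ▸ hroot)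
  have hx01 : x i₀ < x i₁ := hmono (by simp [i₀, i₁, Fin.lt_def])
  have hlt : μstar < x i₁ := by
    have hpx : ∀ i, p.IsRoot (x i) := fun i => by
      simp [hp, IsRoot, eval_prod, prod_eq_zero (mem_univ i)]
    obtain ⟨c, hc, hc'⟩ := exists_isRoot_derivative_mem_Ioo hx01 (hpx i₀) (hpx i₁)
    exact (hμ.2 c (mem_roots'.2 ⟨hp', hc'⟩)).trans_lt hc.2
  have hgt : ∀ i ∈ univ.erase i₀, μstar < x i := fun i hi =>
    hlt.trans_le (hmono.monotone (Fin.le_def.2 (by simp [i₁, Fin.ext_iff, i₀] at hi ⊢; omega)))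
  have hpos : 0 < μstar := pos_of_sum_inv_sub_eq_zero
    (fun i => hx0 ▸ hmono.monotone (Fin.le_def.2 (Nat.zero_le _))) (hx0 ▸ hx01) hsum
  have hkey := inv_eq_sum_erase_inv_sub_of_sum_inv_sub_eq_zero hx0 hsum
  have hn1 : (0 : ℝ) ≤ n - 1 := sub_nonneg.2 (by exact_mod_cast (by omega : 1 ≤ n))
  constructor
  · calc 1 / 2 * H = (n - 1) * (2 * ∑ i ∈ univ.erase i₀, (x i)⁻¹)⁻¹ := by
          rw [hH]; field_simp
      _ ≤ (n - 1) * μstar := mul_le_mul_of_nonneg_left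
          (inv_two_mul_sum_inv_le_of_inv_eq_sum_inv_sub hpos hgt hkey) hn1
  · rw [hH, div_eq_mul_inv]
    exact mul_le_mul_of_nonneg_left (le_inv_sum_inv_of_inv_eq_sum_inv_sub hpos hgt hkey) hn1
end

section
/- Suppose the density f satisfies f(x) = c + O(x^δ) as x → 0⁺ for some constants c, δ > 0, and suppose that the random variables Yₙ = Xₙ − c·log n converge in distribution to a random variable 𝒴. Set 𝔠₁ = 1/c. Then the random variables log n · (Hₙ·log n − 𝔠₁) converge in distribution to −𝔠₁²·𝒴; equivalently, their limiting distribution function is x ↦ 1 − G(−x/𝔠₁²), where G is the distribution function of 𝒴. -/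
/-!
Since `Hₙ = 1/Xₙ`, for large `n` the event `log n · (Hₙ log n - 1/c) ≤ t` is exactly
`Xₙ - c log n ≥ aₙ` with `aₙ = -t c² log n / (log n + t c) → -t c²`. Convergence of distribution
functions at continuity points is stable under such a moving threshold: sandwich `aₙ` between two
continuity points of the monotone `G`, which are dense. Hence the probability tends to
`1 - G(-t c²) = 1 - G(-t / 𝔠₁²)`.
-/

open MeasureTheory ProbabilityTheory Filter Topology

lemma Monotone.exists_continuousAt_between {G : ℝ → ℝ} (hG : Monotone G) {a b : ℝ}
    (hab : a < b) : ∃ u, ContinuousAt G u ∧ a < u ∧ u < b := by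
  obtain ⟨u, hu, hau, hub⟩ := (hG.countable_not_continuousAt.dense_compl ℝ).exists_between hab
  exact ⟨u, not_not.mp hu, hau, hub⟩

section ConvergenceInDistribution

variable {Ω ι : Type*} [MeasurableSpace Ω] {P : Measure Ω} {l : Filter ι}
  {Z : ι → Ω → ℝ} {G : ℝ → ℝ}

lemma tendsto_measure_lt_of_tendsto_cdf [IsFiniteMeasure P] (hG : Monotone G)
    (hconv : ∀ t, ContinuousAt G t → Tendsto (fun i => (P {ω | Z i ω ≤ t}).toReal) l (𝓝 (G t)))
    {a : ι → ℝ} {a₀ : ℝ} (ha : Tendsto a l (𝓝 a₀)) (hGa : ContinuousAt G a₀) :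
    Tendsto (fun i => (P {ω | Z i ω < a i}).toReal) l (𝓝 (G a₀)) := by
  refine tendsto_order.2 ⟨fun b hb => ?_, fun b hb => ?_⟩
  · obtain ⟨lo, hi, ha₀, hIoo⟩ :=
      (mem_nhds_iff_exists_Ioo_subset.1 (hGa.eventually (lt_mem_nhds hb)))
    obtain ⟨u, hu, hlo, hua⟩ := hG.exists_continuousAt_between ha₀.1
    filter_upwards [(hconv u hu).eventually (lt_mem_nhds (hIoo ⟨hlo, hua.trans ha₀.2⟩)),
      ha.eventually (lt_mem_nhds hua)] with i hFu hu_lt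
    exact hFu.trans_le <| ENNReal.toReal_mono (measure_ne_top _ _)
      (measure_mono fun ω hω => lt_of_le_of_lt hω hu_lt)
  · obtain ⟨lo, hi, ha₀, hIoo⟩ :=
      (mem_nhds_iff_exists_Ioo_subset.1 (hGa.eventually (gt_mem_nhds hb)))
    obtain ⟨v, hv, hav, hvi⟩ := hG.exists_continuousAt_between ha₀.2
    filter_upwards [(hconv v hv).eventually (gt_mem_nhds (hIoo ⟨ha₀.1.trans hav, hvi⟩)),
      ha.eventually (gt_mem_nhds hav)] with i hFv hlt_v
    exact lt_of_le_of_lt (ENNReal.toReal_mono (measure_ne_top _ _)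
      (measure_mono fun ω hω => (lt_trans hω hlt_v).le)) hFv

lemma tendsto_measure_le_of_tendsto_cdf [IsProbabilityMeasure P] (hZ : ∀ i, Measurable (Z i))
    (hG : Monotone G)
    (hconv : ∀ t, ContinuousAt G t → Tendsto (fun i => (P {ω | Z i ω ≤ t}).toReal) l (𝓝 (G t)))
    {a : ι → ℝ} {a₀ : ℝ} (ha : Tendsto a l (𝓝 a₀)) (hGa : ContinuousAt G a₀) :
    Tendsto (fun i => (P {ω | a i ≤ Z i ω}).toReal) l (𝓝 (1 - G a₀)) := by
  have hcompl : ∀ i, {ω | a i ≤ Z i ω} = {ω | Z i ω < a i}ᶜ := fun i => by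
    ext ω; simp
  simp_rw [hcompl, ← measureReal_def,
    probReal_compl_eq_one_sub (measurableSet_lt (hZ _) measurable_const), measureReal_def]
  exact tendsto_const_nhds.sub (tendsto_measure_lt_of_tendsto_cdf hG hconv ha hGa)

end ConvergenceInDistribution

lemma ContinuousAt.of_one_sub_comp_neg_div {G : ℝ → ℝ} {k t : ℝ} (hk : k ≠ 0)
    (h : ContinuousAt (fun s => 1 - G (-s / k)) t) : ContinuousAt G (-t / k) := by
  have hcomp : ContinuousAt (fun u => 1 - (1 - G (-(-(k * u)) / k))) (-t / k) := by
    refine continuousAt_const.sub (ContinuousAt.comp (g := fun s => 1 - G (-s / k)) ?_ ?_)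
    · rwa [show -(k * (-t / k)) = t by field_simp]
    · fun_prop
  convert hcomp using 2 with u
  field_simp
  ring

lemma tendsto_mul_div_add_const_atTop (α β : ℝ) :
    Tendsto (fun L : ℝ => α * L / (L + β)) atTop (𝓝 α) := by
  have hden : Tendsto (fun L : ℝ => L + β) atTop atTop :=
    tendsto_atTop_add_const_right _ _ tendsto_id
  have hlim : Tendsto (fun L : ℝ => α - α * β / (L + β)) atTop (𝓝 (α - 0)) :=
    tendsto_const_nhds.sub (tendsto_const_nhds.div_atTop hden)
  rw [sub_zero] at hlim
  refine hlim.congr' ?_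
  filter_upwards [hden.eventually_gt_atTop 0] with L hL
  field_simp
  ring

lemma mul_inv_mul_sub_inv_le_iff {L X c t : ℝ} (hX : 0 < X) (hc : 0 < c) (hD : 0 < L + t * c) :
    L * (X⁻¹ * L - 1 / c) ≤ t ↔ -(t * c ^ 2) * L / (L + t * c) ≤ X - c * L := by
  rw [div_le_iff₀ hD, ← mul_le_mul_iff_of_pos_right (mul_pos hX hc)]
  have h : L * (X⁻¹ * L - 1 / c) * (X * c) = c * L ^ 2 - L * X := by field_simp
  rw [h]
  constructor <;> intro <;> nlinarith

theorem harmonic_mean_limit_law_beta_zero_general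
    {Ω : Type*} [MeasurableSpace Ω] (P : Measure Ω) [IsProbabilityMeasure P]
    (x : ℕ → Ω → ℝ) (hmeas : ∀ i, Measurable (x i))
    (hval : ∀ i ω, x i ω ∈ Set.Ioc (0 : ℝ) 1)
    (c : ℝ) (hc : 0 < c)
    (Xn : ℕ → Ω → ℝ)
    (hXn : ∀ n ω, Xn n ω = (1 / (n : ℝ)) * ∑ i ∈ Finset.range n, (x i ω)⁻¹)
    (Hn : ℕ → Ω → ℝ) (hHn : ∀ n ω, Hn n ω = (Xn n ω)⁻¹)
    -- `𝒴` is a random variable with distribution function `G`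
    {Ω' : Type*} [MeasurableSpace Ω'] (P' : Measure Ω')
    (Y : Ω' → ℝ) (G : ℝ → ℝ)
    (hG : ∀ t, G t = cdf (P'.map Y) t)
    -- `Yₙ = Xₙ - c log n` converges in distribution to `𝒴`
    (hconv : ∀ t : ℝ, ContinuousAt G t →
      Tendsto (fun n => (P {ω | Xn n ω - c * Real.log n ≤ t}).toReal) atTop (nhds (G t)))
    (C₁ : ℝ) (hC₁ : C₁ = 1 / c) :
    ∀ t : ℝ, ContinuousAt (fun s => 1 - G (-s / C₁ ^ 2)) t →
      Tendsto (fun (n : ℕ) => (P {ω | Real.log n * (Hn n ω * Real.log n - C₁) ≤ t}).toReal)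
        atTop (nhds (1 - G (-t / C₁ ^ 2))) := by
  intro t hcont
  subst hC₁
  have hGa := hcont.of_one_sub_comp_neg_div (by positivity)
  have hGmono : Monotone G := (funext hG : G = _) ▸ monotone_cdf _
  have hXmeas : ∀ n, Measurable fun ω => Xn n ω - c * Real.log n := fun n => by
    simp_rw [hXn]; fun_prop
  have hXpos : ∀ n, 1 ≤ n → ∀ ω, 0 < Xn n ω := fun n hn ω => by
    rw [hXn]
    exact mul_pos (by positivity) <| Finset.sum_pos (fun i _ => inv_pos.2 (hval i ω).1)
      ⟨0, Finset.mem_range.2 hn⟩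
  have hlog : Tendsto (fun n : ℕ => Real.log n) atTop atTop :=
    Real.tendsto_log_atTop.comp tendsto_natCast_atTop_atTop
  have hthreshold := (tendsto_mul_div_add_const_atTop (-(t * c ^ 2)) (t * c)).comp hlog
  rw [show -t / (1 / c) ^ 2 = -(t * c ^ 2) by field_simp] at hGa ⊢
  refine (tendsto_measure_le_of_tendsto_cdf hXmeas hGmono hconv hthreshold hGa).congr' ?_
  filter_upwards [(tendsto_atTop_add_const_right _ (t * c) hlog).eventually_gt_atTop 0,
    eventually_ge_atTop 1] with n hD hn
  congr 2
  ext ω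
  simp only [Function.comp_apply, Set.mem_ofPred_eq, hHn]
  exact (mul_inv_mul_sub_inv_le_iff (hXpos n hn ω) hc hD).symm

/-- **Theorem (limit law for the harmonic mean, case `β = 0`).**
Suppose `f(t) = c + O(t^δ)` as `t → 0⁺`, and suppose `Yₙ = Xₙ - c log n` converges in
distribution to a random variable `𝒴` with distribution function `G` (convergence in
distribution is expressed by convergence of the distribution functions at all continuity
points of `G`).  Set `𝔠₁ = 1/c`.  Then `log n · (Hₙ log n - 𝔠₁)` converges in distribution
to `-𝔠₁² 𝒴`, i.e. its limiting distribution function is `t ↦ 1 - G(-t/𝔠₁²)`. -/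
theorem harmonic_mean_limit_law_beta_zero
    {Ω : Type*} [MeasurableSpace Ω] (P : Measure Ω) [IsProbabilityMeasure P]
    (x : ℕ → Ω → ℝ) (hmeas : ∀ i, Measurable (x i))
    (hindep : iIndepFun x P)
    (hval : ∀ i ω, x i ω ∈ Set.Ioc (0 : ℝ) 1)
    (f : ℝ → ℝ)
    (hpdf : ∀ i, Measure.map (x i) P = volume.withDensity (fun t => ENNReal.ofReal (f t)))
    (c δ : ℝ) (hc : 0 < c) (hδ : 0 < δ)
    (hf : (fun t => f t - c) =O[nhdsWithin 0 (Set.Ioi 0)] (fun t => t ^ δ))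
    (Xn : ℕ → Ω → ℝ)
    (hXn : ∀ n ω, Xn n ω = (1 / (n : ℝ)) * ∑ i ∈ Finset.range n, (x i ω)⁻¹)
    (Hn : ℕ → Ω → ℝ) (hHn : ∀ n ω, Hn n ω = (Xn n ω)⁻¹)
    -- `𝒴` is a random variable with distribution function `G`
    {Ω' : Type*} [MeasurableSpace Ω'] (P' : Measure Ω') [IsProbabilityMeasure P']
    (Y : Ω' → ℝ) (hY : Measurable Y) (G : ℝ → ℝ)
    (hG : ∀ t, G t = cdf (P'.map Y) t)
    -- `Yₙ = Xₙ - c log n` converges in distribution to `𝒴`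
    (hconv : ∀ t : ℝ, ContinuousAt G t →
      Tendsto (fun n => (P {ω | Xn n ω - c * Real.log n ≤ t}).toReal) atTop (nhds (G t)))
    (C₁ : ℝ) (hC₁ : C₁ = 1 / c) :
    ∀ t : ℝ, ContinuousAt (fun s => 1 - G (-s / C₁ ^ 2)) t →
      Tendsto (fun (n : ℕ) => (P {ω | Real.log n * (Hn n ω * Real.log n - C₁) ≤ t}).toReal)
        atTop (nhds (1 - G (-t / C₁ ^ 2))) :=
  harmonic_mean_limit_law_beta_zero_general P x hmeas hval c hc Xn hXn Hn hHn P' Y G hG hconv C₁ hC₁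
end

section
/- Let n ≥ 2 and let a₂, …, aₙ be real numbers with 0 ≤ aᵢ < 1. Then the expected learning time of the learner with full memory satisfies T = (1/n)·∑_{k=1}^{n−1} [1/C(n−1,k)]·∑_{S} ∑_{i∈S} 1/(1−aᵢ) = (1/2)·∑_{i=2}^n 1/(1−aᵢ) = (n−1)/(2·H_{n−1}), where the middle summation is over all k-element subsets S of {2, …, n}, C(n−1,k) is the binomial coefficient, and H_{n−1} = (n−1)/(∑_{i=2}^n 1/(1−aᵢ)) is the harmonic mean of the numbers 1−a₂, …, 1−aₙ. -/
/-!
Each `i ∈ D` lies in `C(#D - 1, k - 1)` of the `k`-subsets of `D`, and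
`C(#D - 1, k - 1) / C(#D, k) = k / #D`, so the `k`-th summand is `k / #D` times `∑ i ∈ D, f i`.
Summing `k` over `1, …, #D` gives `#D (#D + 1) / 2`, and `#D + 1 = n` cancels against the prefactor.
-/

open Finset

lemma sum_powersetCard_sum_eq_choose_nsmul {α M : Type*} [DecidableEq α] [AddCommMonoid M]
    (D : Finset α) (f : α → M) {k : ℕ} (hk : k ≠ 0) :
    ∑ S ∈ D.powersetCard k, ∑ i ∈ S, f i = (#D - 1).choose (k - 1) • ∑ i ∈ D, f i := by
  calc ∑ S ∈ D.powersetCard k, ∑ i ∈ S, f i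
      = ∑ S ∈ D.powersetCard k, ∑ i ∈ D with i ∈ S, f i := by
        refine sum_congr rfl fun S hS => ?_
        rw [filter_mem_eq_inter, inter_eq_right.2 (mem_powersetCard.1 hS).1]
    _ = ∑ i ∈ D, ∑ S ∈ D.powersetCard k with {i} ⊆ S, f i := by
        simp only [sum_filter, singleton_subset_iff]
        exact sum_comm
    _ = ∑ i ∈ D, (#D - 1).choose (k - 1) • f i := by
        refine sum_congr rfl fun i hi => ?_
        rw [sum_const, card_filter_powersetCard_subset _ _ _ (singleton_subset_iff.2 hi)
          (by simpa [Nat.one_le_iff_ne_zero] using hk), card_singleton]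
    _ = (#D - 1).choose (k - 1) • ∑ i ∈ D, f i := (smul_sum ..).symm

lemma cast_choose_pred_div_cast_choose {K : Type*} [Field K] [CharZero K] {m k : ℕ}
    (hk : k ≠ 0) (hkm : k ≤ m) :
    ((m - 1).choose (k - 1) : K) / m.choose k = k / m := by
  obtain ⟨m, rfl⟩ := Nat.exists_eq_add_one_of_ne_zero (by omega : m ≠ 0)
  obtain ⟨k, rfl⟩ := Nat.exists_eq_add_one_of_ne_zero hk
  have hC : (((m + 1).choose (k + 1) : ℕ) : K) ≠ 0 := by
    exact_mod_cast (Nat.choose_pos hkm).ne'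
  rw [div_eq_div_iff hC (Nat.cast_ne_zero.2 m.succ_ne_zero)]
  norm_cast
  rw [Nat.add_sub_cancel, Nat.add_sub_cancel, mul_comm, Nat.add_one_mul_choose_eq, mul_comm]

lemma sum_Icc_one_cast_mul_two {K : Type*} [CommSemiring K] (m : ℕ) :
    (∑ k ∈ Icc 1 m, (k : K)) * 2 = m * (m + 1) := by
  induction m with
  | zero => simp
  | succ m ih => rw [sum_Icc_succ_top (by omega), add_mul, ih]; push_cast; ring

lemma average_sum_powersetCard_eq_half_sum {α K : Type*} [DecidableEq α] [Field K] [CharZero K]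
    (D : Finset α) (f : α → K) :
    1 / (#D + 1 : K) * ∑ k ∈ Icc 1 #D,
      1 / ((#D).choose k : K) * ∑ S ∈ D.powersetCard k, ∑ i ∈ S, f i = 1 / 2 * ∑ i ∈ D, f i := by
  rcases D.eq_empty_or_nonempty with rfl | hD
  · simp
  have hterm : ∀ k ∈ Icc 1 #D, 1 / ((#D).choose k : K) * ∑ S ∈ D.powersetCard k, ∑ i ∈ S, f i
      = k * ((∑ i ∈ D, f i) / #D) := by
    intro k hk
    rw [mem_Icc] at hk
    rw [sum_powersetCard_sum_eq_choose_nsmul D f (by omega), nsmul_eq_mul, ← mul_assoc,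
      one_div_mul_eq_div, cast_choose_pred_div_cast_choose (by omega) hk.2]
    ring
  have hm : (#D : K) ≠ 0 := by exact_mod_cast hD.card_pos.ne'
  have hgauss := sum_Icc_one_cast_mul_two (K := K) #D
  rw [sum_congr rfl hterm, ← sum_mul]
  field_simp
  linear_combination (∑ i ∈ D, f i) * hgauss

theorem full_memory_expected_learning_time_general (n : ℕ) (hn : 2 ≤ n) (a : ℕ → ℝ)
    (T : ℝ)
    (hT : T = (1 / (n : ℝ)) * ∑ k ∈ Finset.Icc 1 (n - 1),
      (1 / ((n - 1).choose k : ℝ)) *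
        ∑ S ∈ (Finset.Icc 2 n).powersetCard k, ∑ i ∈ S, 1 / (1 - a i))
    (H : ℝ) (hH : H = ((n : ℝ) - 1) / ∑ i ∈ Finset.Icc 2 n, 1 / (1 - a i)) :
    T = (1 / 2) * ∑ i ∈ Finset.Icc 2 n, 1 / (1 - a i) ∧
    T = ((n : ℝ) - 1) / (2 * H) := by
  have hcard : #(Icc 2 n) = n - 1 := by rw [Nat.card_Icc]; omega
  have hn_cast : (n : ℝ) = ((n - 1 : ℕ) : ℝ) + 1 := by rw [Nat.cast_sub (by omega)]; ring
  have hhalf : T = 1 / 2 * ∑ i ∈ Icc 2 n, 1 / (1 - a i) := by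
    rw [hT, hn_cast, ← hcard]
    exact average_sum_powersetCard_eq_half_sum _ _
  refine ⟨hhalf, ?_⟩
  have hn_sub : (n : ℝ) - 1 ≠ 0 := by
    have : (2 : ℝ) ≤ n := by exact_mod_cast hn
    exact (by linarith : (0 : ℝ) < n - 1).ne'
  rw [hhalf, hH, mul_comm 2, ← div_div, div_div_cancel₀ hn_sub]
  ring

/-- **Expected learning time of the learner with full memory.**
For `n ≥ 2` and overlaps `0 ≤ aᵢ < 1` (`2 ≤ i ≤ n`), the expected learning time
`T = (1/n) ∑_{k=1}^{n-1} (1/C(n-1,k)) ∑_{S ⊆ {2,…,n}, |S| = k} ∑_{i ∈ S} 1/(1-aᵢ)`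
equals `(1/2) ∑_{i=2}^n 1/(1-aᵢ) = (n-1)/(2 H_{n-1})`, where
`H_{n-1} = (n-1)/∑_{i=2}^n 1/(1-aᵢ)` is the harmonic mean of the `1-aᵢ`. -/
theorem full_memory_expected_learning_time (n : ℕ) (hn : 2 ≤ n) (a : ℕ → ℝ)
    (ha : ∀ i ∈ Finset.Icc 2 n, 0 ≤ a i ∧ a i < 1)
    (T : ℝ)
    (hT : T = (1 / (n : ℝ)) * ∑ k ∈ Finset.Icc 1 (n - 1),
      (1 / ((n - 1).choose k : ℝ)) *
        ∑ S ∈ (Finset.Icc 2 n).powersetCard k, ∑ i ∈ S, 1 / (1 - a i))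
    (H : ℝ) (hH : H = ((n : ℝ) - 1) / ∑ i ∈ Finset.Icc 2 n, 1 / (1 - a i)) :
    T = (1 / 2) * ∑ i ∈ Finset.Icc 2 n, 1 / (1 - a i) ∧
    T = ((n : ℝ) - 1) / (2 * H) :=
  full_memory_expected_learning_time_general n hn a T hT H hH
end

section
/- Fix Δ ∈ (0,1) and suppose the common density g of the overlaps satisfies g(1−x) = c + O(x^δ) as x → 0⁺ for some constants c, δ > 0 (e.g. the uniform distribution on [0,1)). Then there exist positive constants C₁′, C₂′ (independent of n) such that lim_{n→∞} P( C₁′ < N_Δ^{fm} / ((1−Δ)²·n·log n) < C₂′ ) = 1. -/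
/-!
Put `Xᵢ = 1 / (1 - aᵢ)`. Since the density of `aᵢ` is close to `c` near `1`, the tail
`P(x ≤ Xᵢ)` lies between `(c/2)/x` and `(3c/2)/x` for large `x`: the `Xᵢ` are Cauchy-like.
Truncated at `u = n log n`, the layer-cake formula gives each `min Xᵢ u` a mean of order `log n`
and a second moment `O(u)`, so by Chebyshev the truncated sum stays within a constant factor of
`n log n` outside an event of probability `O(1 / log n)`; a union bound shows that no `Xᵢ`
exceeds `u` outside another such event. Finally `M(M+1)/(2n(n-1))` is of order `(1-Δ)²`.
-/

open MeasureTheory ProbabilityTheory Filter Set Topology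
open scoped Finset

section LayerCake

variable {Ω : Type*} [MeasurableSpace Ω] {μ : Measure Ω} {Y : Ω → ℝ} {M v : ℝ}

lemma antitone_measureReal_le [IsFiniteMeasure μ] (Y : Ω → ℝ) :
    Antitone fun t => μ.real {ω | t ≤ Y ω} :=
  fun _ _ hst => measureReal_mono fun _ h => hst.trans h

lemma integral_eq_intervalIntegral_measureReal_le [IsFiniteMeasure μ] (hY : Measurable Y)
    (hY0 : ∀ ω, 0 ≤ Y ω) (hYM : ∀ ω, Y ω ≤ M) (hM : 0 ≤ M) :
    ∫ ω, Y ω ∂μ = ∫ t in 0..M, μ.real {ω | t ≤ Y ω} := by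
  have hint : Integrable Y μ := (integrable_const M).mono' hY.aestronglyMeasurable
    (ae_of_all _ fun ω => by rw [Real.norm_eq_abs, abs_of_nonneg (hY0 ω)]; exact hYM ω)
  rw [intervalIntegral.integral_of_le hM]
  exact hint.integral_eq_integral_Ioc_meas_le (ae_of_all _ hY0) (ae_of_all _ hYM)

lemma integral_le_add_intervalIntegral_of_measureReal_le [IsProbabilityMeasure μ]
    (hY : Measurable Y) (hY0 : ∀ ω, 0 ≤ Y ω) (hYM : ∀ ω, Y ω ≤ M) (hv : 0 ≤ v) (hvM : v ≤ M)
    {f : ℝ → ℝ} (hf : IntervalIntegrable f volume v M)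
    (htail : ∀ t ∈ Icc v M, μ.real {ω | t ≤ Y ω} ≤ f t) :
    ∫ ω, Y ω ∂μ ≤ v + ∫ t in v..M, f t := by
  have hF := antitone_measureReal_le (μ := μ) Y
  rw [integral_eq_intervalIntegral_measureReal_le hY hY0 hYM (hv.trans hvM),
    ← intervalIntegral.integral_add_adjacent_intervals hF.intervalIntegrable hF.intervalIntegrable]
  have hbelow : ∫ t in 0..v, μ.real {ω | t ≤ Y ω} ≤ ∫ _ in 0..v, (1 : ℝ) :=
    intervalIntegral.integral_mono_on hv hF.intervalIntegrable intervalIntegrable_const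
      fun _ _ => measureReal_le_one
  have habove := intervalIntegral.integral_mono_on hvM hF.intervalIntegrable hf htail
  simp only [intervalIntegral.integral_const, sub_zero, smul_eq_mul, mul_one] at hbelow
  linarith

lemma intervalIntegral_le_integral_of_le_measureReal [IsFiniteMeasure μ]
    (hY : Measurable Y) (hY0 : ∀ ω, 0 ≤ Y ω) (hYM : ∀ ω, Y ω ≤ M) (hv : 0 ≤ v) (hvM : v ≤ M)
    {f : ℝ → ℝ} (hf : IntervalIntegrable f volume v M)
    (htail : ∀ t ∈ Icc v M, f t ≤ μ.real {ω | t ≤ Y ω}) :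
    ∫ t in v..M, f t ≤ ∫ ω, Y ω ∂μ := by
  have hF := antitone_measureReal_le (μ := μ) Y
  rw [integral_eq_intervalIntegral_measureReal_le hY hY0 hYM (hv.trans hvM),
    ← intervalIntegral.integral_add_adjacent_intervals hF.intervalIntegrable hF.intervalIntegrable]
  have hbelow : 0 ≤ ∫ t in 0..v, μ.real {ω | t ≤ Y ω} :=
    intervalIntegral.integral_nonneg hv fun _ _ => measureReal_nonneg
  have habove := intervalIntegral.integral_mono_on hvM hf hF.intervalIntegrable htail
  linarith

end LayerCake

lemma integral_inv_sqrt {a b : ℝ} (ha : 0 < a) (hab : a ≤ b) :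
    ∫ t in a..b, (√t)⁻¹ = 2 * (√b - √a) := by
  have hpos : ∀ t ∈ uIcc a b, 0 < t := fun t ht => ha.trans_le (by
    rw [uIcc_of_le hab] at ht; exact ht.1)
  rw [intervalIntegral.integral_eq_sub_of_hasDerivAt (f := fun t => 2 * √t)]
  · ring
  · intro t ht
    have h := (Real.hasDerivAt_sqrt (hpos t ht).ne').const_mul (2 : ℝ)
    rwa [mul_one_div, div_mul_cancel_left₀ two_ne_zero] at h
  · exact (ContinuousOn.inv₀ Real.continuous_sqrt.continuousOn
      fun t ht => (Real.sqrt_pos.2 (hpos t ht)).ne').intervalIntegrable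

lemma intervalIntegrable_const_div {a c : ℝ} (b : ℝ) (ha : 0 < a) (hac : a ≤ c) :
    IntervalIntegrable (fun t => b / t) volume a c :=
  (continuousOn_const.div continuousOn_id fun t ht =>
    (ha.trans_le (by rw [uIcc_of_le hac] at ht; exact ht.1)).ne').intervalIntegrable

lemma setOf_le_min_eq {α : Type*} {X : α → ℝ} {t u : ℝ} (ht : t ≤ u) :
    {a | t ≤ min (X a) u} = {a | t ≤ X a} := by
  ext; simp [ht]

lemma log_le_log_mul_log_div {x₁ y : ℝ} (hx₁ : 1 ≤ x₁) (hy : x₁ ≤ Real.log y) (hy0 : 0 < y) :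
    Real.log y ≤ Real.log (y * Real.log y / x₁) ∧
      Real.log (y * Real.log y / x₁) ≤ 2 * Real.log y := by
  have hL : 0 < Real.log y := by linarith
  rw [Real.log_div (by positivity) (by positivity), Real.log_mul hy0.ne' hL.ne']
  have h1 : Real.log x₁ ≤ Real.log (Real.log y) := Real.log_le_log (by linarith) hy
  have h2 : Real.log (Real.log y) ≤ Real.log y - 1 := Real.log_le_sub_one_of_pos hL
  have h3 : 0 ≤ Real.log x₁ := Real.log_nonneg hx₁
  constructor <;> linarith

section TruncatedMoments

variable {Ω : Type*} [MeasurableSpace Ω] {μ : Measure Ω} {X : Ω → ℝ} {x₁ u b : ℝ}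

lemma mul_log_div_le_integral_min [IsFiniteMeasure μ] (hX : Measurable X) (hX0 : ∀ ω, 0 ≤ X ω)
    (hx₁ : 0 < x₁) (hu : x₁ ≤ u) (htail : ∀ x ∈ Icc x₁ u, b / x ≤ μ.real {ω | x ≤ X ω}) :
    b * Real.log (u / x₁) ≤ ∫ ω, min (X ω) u ∂μ := by
  have hint : ∫ t in x₁..u, b / t = b * Real.log (u / x₁) := by
    simp [div_eq_mul_inv, integral_inv_of_pos hx₁ (hx₁.trans_le hu)]
  rw [← hint]
  refine intervalIntegral_le_integral_of_le_measureReal (hX.min measurable_const)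
    (fun ω => le_min (hX0 ω) (hx₁.le.trans hu)) (fun ω => min_le_right _ _) hx₁.le hu ?_ ?_
  · exact intervalIntegrable_const_div b hx₁ hu
  · intro t ht
    rw [setOf_le_min_eq ht.2]
    exact htail t ht

lemma integral_min_le_add_mul_log_div [IsProbabilityMeasure μ] (hX : Measurable X)
    (hX0 : ∀ ω, 0 ≤ X ω) (hx₁ : 0 < x₁) (hu : x₁ ≤ u)
    (htail : ∀ x ∈ Icc x₁ u, μ.real {ω | x ≤ X ω} ≤ b / x) :
    ∫ ω, min (X ω) u ∂μ ≤ x₁ + b * Real.log (u / x₁) := by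
  have hint : ∫ t in x₁..u, b / t = b * Real.log (u / x₁) := by
    simp [div_eq_mul_inv, integral_inv_of_pos hx₁ (hx₁.trans_le hu)]
  rw [← hint]
  refine integral_le_add_intervalIntegral_of_measureReal_le (hX.min measurable_const)
    (fun ω => le_min (hX0 ω) (hx₁.le.trans hu)) (fun ω => min_le_right _ _) hx₁.le hu ?_ ?_
  · exact intervalIntegrable_const_div b hx₁ hu
  · intro t ht
    rw [setOf_le_min_eq ht.2]
    exact htail t ht

lemma integral_min_sq_le [IsProbabilityMeasure μ] (hX : Measurable X) (hX0 : ∀ ω, 0 ≤ X ω)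
    (hx₁ : 0 < x₁) (hu : x₁ ≤ u) (htail : ∀ x ∈ Icc x₁ u, μ.real {ω | x ≤ X ω} ≤ b / x) :
    ∫ ω, min (X ω) u ^ 2 ∂μ ≤ x₁ ^ 2 + 2 * b * (u - x₁) := by
  have hsq : x₁ ^ 2 ≤ u ^ 2 := pow_le_pow_left₀ hx₁.le hu 2
  have hY0 : ∀ ω, 0 ≤ min (X ω) u := fun ω => le_min (hX0 ω) (hx₁.le.trans hu)
  have hint : ∫ t in x₁ ^ 2..u ^ 2, b * (√t)⁻¹ = 2 * b * (u - x₁) := by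
    rw [intervalIntegral.integral_const_mul, integral_inv_sqrt (by positivity) hsq,
      Real.sqrt_sq hx₁.le, Real.sqrt_sq (hx₁.le.trans hu)]
    ring
  rw [← hint]
  refine integral_le_add_intervalIntegral_of_measureReal_le
    ((hX.min measurable_const).pow_const 2) (fun ω => sq_nonneg _)
    (fun ω => pow_le_pow_left₀ (hY0 ω) (min_le_right _ _) 2) (sq_nonneg _) hsq ?_ ?_
  · exact (continuousOn_const.mul (ContinuousOn.inv₀ Real.continuous_sqrt.continuousOn
      fun t ht => (Real.sqrt_pos.2 ((pow_pos hx₁ 2).trans_le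
        (by rw [uIcc_of_le hsq] at ht; exact ht.1))).ne')).intervalIntegrable
  · intro t ht
    have hx₁t : x₁ ≤ √t := Real.le_sqrt_of_sq_le ht.1
    have htu : √t ≤ u := Real.sqrt_le_left (hx₁.le.trans hu) |>.2 ht.2
    have hset : {ω | t ≤ min (X ω) u ^ 2} = {ω | √t ≤ X ω} := by
      rw [← setOf_le_min_eq htu]
      ext ω
      exact (Real.sqrt_le_left (hY0 ω)).symm
    rw [hset, ← div_eq_mul_inv]
    exact htail _ ⟨hx₁t, htu⟩

lemma truncated_moments_at_log_scale [IsProbabilityMeasure μ] {x₁ b₁ b₂ y : ℝ} (hX : Measurable X)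
    (hX0 : ∀ ω, 0 ≤ X ω) (hlo : ∀ x, x₁ ≤ x → b₁ / x ≤ μ.real {ω | x ≤ X ω})
    (hhi : ∀ x, x₁ ≤ x → μ.real {ω | x ≤ X ω} ≤ b₂ / x)
    (hb₁ : 0 ≤ b₁) (hb₂ : 0 ≤ b₂) (hx₁ : 1 ≤ x₁) (hy : 1 ≤ y) (hlog : x₁ ≤ Real.log y) :
    ∫ ω, min (X ω) (y * Real.log y) ∂μ ∈ Icc (b₁ * Real.log y) ((1 + 2 * b₂) * Real.log y) ∧
      ∫ ω, min (X ω) (y * Real.log y) ^ 2 ∂μ ≤ (x₁ ^ 2 + 2 * b₂) * (y * Real.log y) := by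
  have hLu : Real.log y ≤ y * Real.log y := le_mul_of_one_le_left (by linarith) hy
  have hx₁u : x₁ ≤ y * Real.log y := hlog.trans hLu
  have hlogu := log_le_log_mul_log_div hx₁ hlog (by linarith)
  have hmean_lo := mul_log_div_le_integral_min hX hX0 (by linarith) hx₁u fun x hx => hlo x hx.1
  have hmean_hi := integral_min_le_add_mul_log_div hX hX0 (by linarith) hx₁u fun x hx => hhi x hx.1
  have hsq := integral_min_sq_le hX hX0 (by linarith) hx₁u fun x hx => hhi x hx.1
  refine ⟨⟨?_, ?_⟩, ?_⟩
  · exact (mul_le_mul_of_nonneg_left hlogu.1 hb₁).trans hmean_lo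
  · nlinarith [hlogu.2]
  · nlinarith

end TruncatedMoments

section Sums

variable {Ω ι : Type*} [MeasurableSpace Ω] {μ : Measure Ω} [IsProbabilityMeasure μ]

lemma measure_le_abs_sum_sub_integral_le {Z : ι → Ω → ℝ} {s : Finset ι}
    (hZ : ∀ i ∈ s, MemLp (Z i) 2 μ) (hind : Set.Pairwise ↑s fun i j => IndepFun (Z i) (Z j) μ)
    {d : ℝ} (hd : 0 < d) :
    μ {ω | d ≤ |∑ i ∈ s, Z i ω - ∑ i ∈ s, ∫ ω', Z i ω' ∂μ|} ≤
      ENNReal.ofReal ((∑ i ∈ s, ∫ ω, Z i ω ^ 2 ∂μ) / d ^ 2) := by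
  have hcheb := meas_ge_le_variance_div_sq (memLp_finsetSum' s hZ) hd
  simp only [IndepFun.variance_sum hZ hind, Finset.sum_apply,
    integral_finsetSum s fun i hi => (hZ i hi).integrable one_le_two] at hcheb
  refine hcheb.trans (ENNReal.ofReal_le_ofReal ?_)
  gcongr with i hi
  exact variance_le_expectation_sq (hZ i hi).1

lemma measure_sum_notMem_Ioo_le {X : ι → Ω → ℝ} {s : Finset ι} (hX : ∀ i, Measurable (X i))
    (hX0 : ∀ i ω, 0 ≤ X i ω) (hind : Set.Pairwise ↑s fun i j => IndepFun (X i) (X j) μ)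
    {u m₁ m₂ q p d : ℝ} (hd : 0 < d) (hm : ∀ i ∈ s, ∫ ω, min (X i ω) u ∂μ ∈ Icc m₁ m₂)
    (hq : ∀ i ∈ s, ∫ ω, min (X i ω) u ^ 2 ∂μ ≤ q) (hp : ∀ i ∈ s, μ.real {ω | u ≤ X i ω} ≤ p) :
    μ {ω | ∑ i ∈ s, X i ω ∉ Ioo (#s * m₁ - d) (#s * m₂ + d)} ≤
      ENNReal.ofReal (#s * q / d ^ 2) + ENNReal.ofReal (#s * p) := by
  set Y : ι → Ω → ℝ := fun i ω => min (X i ω) u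
  have hY : ∀ i, MemLp (Y i) 2 μ := fun i =>
    MemLp.of_bound ((hX i).min measurable_const).aestronglyMeasurable |u|
      (ae_of_all _ fun ω => abs_le.2 ⟨le_min (by linarith [abs_nonneg u, hX0 i ω]) (neg_abs_le u),
        (min_le_right _ _).trans (le_abs_self u)⟩)
  have hφ : Measurable fun x : ℝ => min x u := measurable_id.min measurable_const
  have hdev := measure_le_abs_sum_sub_integral_le (fun i _ => hY i)
    (fun i hi j hj hij => (hind hi hj hij).comp hφ hφ) hd
  have hexc : μ (⋃ i ∈ s, {ω | u < X i ω}) ≤ ENNReal.ofReal (#s * p) := by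
    rw [← ofReal_measureReal (measure_ne_top μ _)]
    refine ENNReal.ofReal_le_ofReal ((measureReal_biUnion_finset_le _ _).trans ?_)
    simpa using Finset.sum_le_card_nsmul s (fun i => μ.real {ω | u < X i ω}) p fun i hi =>
      le_trans (measureReal_mono fun (ω : Ω) (h : u < X i ω) => h.le) (hp i hi)
  have hsub : {ω | ∑ i ∈ s, X i ω ∉ Ioo (#s * m₁ - d) (#s * m₂ + d)} ⊆
      {ω | d ≤ |∑ i ∈ s, Y i ω - ∑ i ∈ s, ∫ ω', Y i ω' ∂μ|} ∪ ⋃ i ∈ s, {ω | u < X i ω} := by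
    intro ω hω
    by_contra hgood
    simp only [mem_union, mem_ofPred_eq, mem_iUnion, not_or, not_le, not_exists, not_lt,
      abs_lt] at hgood
    obtain ⟨hclose, hle⟩ := hgood
    have hsum : ∑ i ∈ s, X i ω = ∑ i ∈ s, Y i ω :=
      Finset.sum_congr rfl fun i hi => (min_eq_left (hle i hi)).symm
    have hm_lo : #s * m₁ ≤ ∑ i ∈ s, ∫ ω', Y i ω' ∂μ := by
      simpa using Finset.card_nsmul_le_sum s _ _ fun i hi => (hm i hi).1
    have hm_hi : ∑ i ∈ s, ∫ ω', Y i ω' ∂μ ≤ #s * m₂ := by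
      simpa using Finset.sum_le_card_nsmul s _ _ fun i hi => (hm i hi).2
    exact hω ⟨by rw [hsum]; linarith, by rw [hsum]; linarith⟩
  calc _ ≤ _ := measure_mono hsub
    _ ≤ _ := measure_union_le _ _
    _ ≤ _ := by
      gcongr
      refine hdev.trans (ENNReal.ofReal_le_ofReal ?_)
      gcongr
      simpa using Finset.sum_le_card_nsmul s _ _ hq

end Sums

section HeavyTailedSums

variable {Ω ι : Type*} [MeasurableSpace Ω] {μ : Measure Ω} [IsProbabilityMeasure μ]
  {X : ι → Ω → ℝ} {x₁ b₁ b₂ : ℝ}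

lemma measure_sum_notMem_Ioo_mul_log_le (hX : ∀ i, Measurable (X i)) (hX0 : ∀ i ω, 0 ≤ X i ω)
    (hind : Pairwise fun i j => IndepFun (X i) (X j) μ)
    (hlo : ∀ i x, x₁ ≤ x → b₁ / x ≤ μ.real {ω | x ≤ X i ω})
    (hhi : ∀ i x, x₁ ≤ x → μ.real {ω | x ≤ X i ω} ≤ b₂ / x)
    (hb₁ : 0 < b₁) (hb₂ : 0 ≤ b₂) (hx₁ : 1 ≤ x₁)
    {s : Finset ι} {n : ℕ} (hsn : #s ≤ n) (hns : n ≤ 2 * #s) (hlog : x₁ ≤ Real.log n) :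
    μ {ω | ∑ i ∈ s, X i ω ∉
        Ioo (b₁ / 4 * (n * Real.log n)) ((1 + 2 * b₂ + b₁) * (n * Real.log n))} ≤
      ENNReal.ofReal ((16 * (x₁ ^ 2 + 2 * b₂) / b₁ ^ 2 + b₂) / Real.log n) := by
  have hn : (1 : ℝ) ≤ n := by
    rcases Nat.eq_zero_or_pos n with rfl | h
    · simp at hlog; linarith
    · exact_mod_cast h
  have hmom := fun i => truncated_moments_at_log_scale (μ := μ) (hX i) (hX0 i) (hlo i) (hhi i)
    hb₁.le hb₂ hx₁ hn hlog
  have hsn' : (#s : ℝ) ≤ n := by exact_mod_cast hsn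
  have hns' : (n : ℝ) ≤ 2 * #s := by exact_mod_cast hns
  set L := Real.log n with hLdef
  have hL : 1 ≤ L := hx₁.trans hlog
  set u := (n : ℝ) * L with hudef
  have hx₁u : x₁ ≤ u := hlog.trans (le_mul_of_one_le_left (by linarith) hn)
  have hbound := measure_sum_notMem_Ioo_le hX hX0 (fun i _ j _ hij => hind hij)
    (s := s) (d := b₁ / 4 * u) (by positivity) (fun i _ => (hmom i).1) (fun i _ => (hmom i).2)
    (fun i _ => hhi i u hx₁u)
  refine (measure_mono ?_).trans (hbound.trans ?_)
  · refine fun ω hω hmem => hω (Ioo_subset_Ioo ?_ ?_ hmem)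
    · nlinarith [mul_le_mul_of_nonneg_right hns' (by positivity : 0 ≤ b₁ * L)]
    · nlinarith [mul_le_mul_of_nonneg_right hsn' (by positivity : 0 ≤ (1 + 2 * b₂) * L)]
  rw [← ENNReal.ofReal_add (by positivity) (by positivity)]
  refine ENNReal.ofReal_le_ofReal ?_
  have hdev : #s * ((x₁ ^ 2 + 2 * b₂) * u) / (b₁ / 4 * u) ^ 2 ≤
      16 * (x₁ ^ 2 + 2 * b₂) / b₁ ^ 2 / L := by
    calc _ ≤ n * ((x₁ ^ 2 + 2 * b₂) * u) / (b₁ / 4 * u) ^ 2 := by gcongr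
      _ = _ := by rw [hudef]; field_simp; ring
  have hexc : #s * (b₂ / u) ≤ b₂ / L := by
    calc _ ≤ n * (b₂ / u) := by gcongr
      _ = _ := by rw [hudef]; field_simp
  rw [add_div]
  linarith

lemma tendsto_measure_sum_mem_Ioo_mul_log (hX : ∀ i, Measurable (X i)) (hX0 : ∀ i ω, 0 ≤ X i ω)
    (hind : Pairwise fun i j => IndepFun (X i) (X j) μ)
    (hlo : ∀ i x, x₁ ≤ x → b₁ / x ≤ μ.real {ω | x ≤ X i ω})
    (hhi : ∀ i x, x₁ ≤ x → μ.real {ω | x ≤ X i ω} ≤ b₂ / x)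
    (hb₁ : 0 < b₁) (hb₂ : 0 ≤ b₂) (hx₁ : 1 ≤ x₁)
    {s : ℕ → Finset ι} (hs : ∀ᶠ n in atTop, #(s n) ≤ n ∧ n ≤ 2 * #(s n)) :
    Tendsto (fun n : ℕ => μ {ω | ∑ i ∈ s n, X i ω ∈
        Ioo (b₁ / 4 * (n * Real.log n)) ((1 + 2 * b₂ + b₁) * (n * Real.log n))}) atTop (𝓝 1) := by
  have hlog := Real.tendsto_log_atTop.comp tendsto_natCast_atTop_atTop
  have hbad : Tendsto (fun n : ℕ => μ {ω | ∑ i ∈ s n, X i ω ∉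
      Ioo (b₁ / 4 * (n * Real.log n)) ((1 + 2 * b₂ + b₁) * (n * Real.log n))}) atTop (𝓝 0) := by
    have hK : Tendsto (fun n : ℕ => ENNReal.ofReal
        ((16 * (x₁ ^ 2 + 2 * b₂) / b₁ ^ 2 + b₂) / Real.log n)) atTop (𝓝 0) := by
      rw [← ENNReal.ofReal_zero]
      exact ENNReal.tendsto_ofReal (tendsto_const_nhds.div_atTop hlog)
    refine tendsto_of_tendsto_of_tendsto_of_le_of_le' tendsto_const_nhds hK
      (Eventually.of_forall fun _ => bot_le) ?_
    filter_upwards [hs, hlog.eventually_ge_atTop x₁] with n hn hlogn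
    exact measure_sum_notMem_Ioo_mul_log_le hX hX0 hind hlo hhi hb₁ hb₂ hx₁ hn.1 hn.2 hlogn
  have hgood := ENNReal.Tendsto.sub tendsto_const_nhds hbad (Or.inl ENNReal.one_ne_top)
  rw [tsub_zero] at hgood
  refine tendsto_of_tendsto_of_tendsto_of_le_of_le hgood tendsto_const_nhds (fun n => ?_)
    fun _ => prob_le_one
  rw [tsub_le_iff_right, ← measure_univ (μ := μ), ← union_compl_self {ω | _}]
  exact measure_union_le _ _

end HeavyTailedSums

section Density

variable {Ω : Type*} [MeasurableSpace Ω] {μ : Measure Ω} {W : Ω → ℝ} {g : ℝ → ℝ} {c₁ c₂ : ℝ}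

lemma measureReal_preimage_mem_Icc_of_density (hW : Measurable W)
    (hpdf : μ.map W = volume.withDensity fun t => ENNReal.ofReal (g t)) {S : Set ℝ}
    (hS : MeasurableSet S) (hSfin : volume S ≠ ⊤) (hc₁ : 0 ≤ c₁) (hc₂ : 0 ≤ c₂)
    (hg : ∀ t ∈ S, g t ∈ Icc c₁ c₂) :
    μ.real (W ⁻¹' S) ∈ Icc (c₁ * volume.real S) (c₂ * volume.real S) := by
  have heq : μ (W ⁻¹' S) = ∫⁻ t in S, ENNReal.ofReal (g t) := by
    rw [← Measure.map_apply hW hS, hpdf, withDensity_apply _ hS]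
  have hlo : ENNReal.ofReal c₁ * volume S ≤ μ (W ⁻¹' S) := by
    rw [heq, ← setLIntegral_const]
    exact setLIntegral_mono' hS fun t ht => ENNReal.ofReal_le_ofReal (hg t ht).1
  have hhi : μ (W ⁻¹' S) ≤ ENNReal.ofReal c₂ * volume S := by
    rw [heq, ← setLIntegral_const]
    exact setLIntegral_mono' hS fun t ht => ENNReal.ofReal_le_ofReal (hg t ht).2
  have hfin : ENNReal.ofReal c₂ * volume S ≠ ⊤ := ENNReal.mul_ne_top ENNReal.ofReal_ne_top hSfin
  rw [measureReal_def, measureReal_def]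
  constructor
  · simpa [ENNReal.toReal_mul, hc₁] using ENNReal.toReal_mono (ne_top_of_le_ne_top hfin hhi) hlo
  · simpa [ENNReal.toReal_mul, hc₂] using ENNReal.toReal_mono hfin hhi

lemma measureReal_le_inv_one_sub_mem_Icc (hW : Measurable W) (hW1 : ∀ ω, W ω < 1)
    (hpdf : μ.map W = volume.withDensity fun t => ENNReal.ofReal (g t)) {τ : ℝ} (hτ : 0 < τ)
    (hc₁ : 0 ≤ c₁) (hc₂ : 0 ≤ c₂) (hg : ∀ t ∈ Ico (1 - τ) 1, g t ∈ Icc c₁ c₂)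
    {x : ℝ} (hx : τ⁻¹ ≤ x) :
    μ.real {ω | x ≤ (1 - W ω)⁻¹} ∈ Icc (c₁ / x) (c₂ / x) := by
  have hx0 : 0 < x := (inv_pos.2 hτ).trans_le hx
  have hxτ : x⁻¹ ≤ τ := inv_le_of_inv_le₀ hτ hx
  have hset : {ω | x ≤ (1 - W ω)⁻¹} = W ⁻¹' Ico (1 - x⁻¹) 1 := by
    ext ω
    simp only [mem_ofPred_eq, mem_preimage, mem_Ico, hW1 ω, and_true]
    rw [le_inv_comm₀ hx0 (sub_pos.2 (hW1 ω))]
    constructor <;> intro h <;> linarith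
  have hvol : volume.real (Ico (1 - x⁻¹) 1) = x⁻¹ := by
    simp [Real.volume_real_Ico, hx0.le]
  rw [hset]
  simpa [hvol, div_eq_mul_inv] using measureReal_preimage_mem_Icc_of_density hW hpdf
    (S := Ico (1 - x⁻¹) 1) measurableSet_Ico measure_Ico_lt_top.ne hc₁ hc₂
    fun t ht => hg t ⟨by linarith [ht.1], ht.2⟩

end Density

lemma exists_forall_Ico_one_mem_Icc {g : ℝ → ℝ} {c δ : ℝ} (hc : 0 < c) (hδ : 0 < δ)
    (hg : (fun t => g (1 - t) - c) =O[𝓝[>] 0] fun t => t ^ δ) :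
    ∃ τ, 0 < τ ∧ τ ≤ 1 ∧ ∀ s ∈ Ico (1 - τ) 1, g s ∈ Icc (c / 2) (3 * c / 2) := by
  have hpow : Tendsto (fun t : ℝ => t ^ δ) (𝓝[>] 0) (𝓝 0) := by
    have := (Real.continuousAt_rpow_const 0 δ (Or.inr hδ.le)).tendsto
    rw [Real.zero_rpow hδ.ne'] at this
    exact this.mono_left nhdsWithin_le_nhds
  have hev : ∀ᶠ t in 𝓝[>] 0, g (1 - t) - c ∈ Icc (-(c / 2)) (c / 2) :=
    hg.trans_tendsto hpow (Icc_mem_nhds (by linarith) (by linarith))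
  obtain ⟨τ, hτ, hsub⟩ := mem_nhdsGT_iff_exists_Ioc_subset.1 hev
  refine ⟨min τ 1, lt_min hτ one_pos, min_le_right _ _, fun s hs => ?_⟩
  have h : g (1 - (1 - s)) - c ∈ Icc (-(c / 2)) (c / 2) :=
    hsub ⟨by linarith [hs.2], by linarith [hs.1, min_le_left τ 1]⟩
  simp only [sub_sub_cancel, mem_Icc] at h
  constructor <;> linarith [h.1, h.2]

lemma floor_mul_coeff_mem_Icc {γ : ℝ} (hγ : 0 < γ) {n : ℕ} (h2 : 2 ≤ γ * n)
    (h1 : γ * n + 1 ≤ n) :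
    (⌊γ * n⌋₊ : ℝ) * ((⌊γ * n⌋₊ : ℝ) + 1) / (2 * n * ((n : ℝ) - 1)) ∈ Icc (γ ^ 2 / 8) γ := by
  have hn : (3 : ℝ) ≤ n := by linarith
  have hM_le : (⌊γ * n⌋₊ : ℝ) ≤ γ * n := Nat.floor_le (by linarith)
  have hM_ge : γ * n / 2 ≤ ⌊γ * n⌋₊ := by linarith [Nat.lt_floor_add_one (γ * n)]
  have hden : 0 < 2 * n * ((n : ℝ) - 1) := by nlinarith
  rw [mem_Icc, le_div_iff₀ hden, div_le_iff₀ hden]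
  constructor <;> nlinarith [mul_le_mul hM_ge hM_ge (by positivity) (by positivity)]

lemma mul_div_mem_Ioo {p S γ A C₁ C₂ : ℝ} (hγ : 0 < γ) (hA : 0 < A) (hC₁ : 0 < C₁)
    (hp : p ∈ Icc (γ ^ 2 / 8) γ) (hS : S ∈ Ioo (C₁ * A) (C₂ * A)) :
    p * S / (γ ^ 2 * A) ∈ Ioo (C₁ / 8) (C₂ / γ) := by
  have hS0 : 0 < S := (mul_pos hC₁ hA).trans hS.1
  rw [mem_Ioo, lt_div_iff₀ (by positivity), div_lt_iff₀ (by positivity)]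
  constructor
  · calc C₁ / 8 * (γ ^ 2 * A) = γ ^ 2 / 8 * (C₁ * A) := by ring
      _ < γ ^ 2 / 8 * S := by gcongr; exact hS.1
      _ ≤ p * S := by gcongr; exact hp.1
  · calc p * S ≤ γ * S := by gcongr; exact hp.2
      _ < γ * (C₂ * A) := by gcongr; exact hS.2
      _ = C₂ / γ * (γ ^ 2 * A) := by field_simp

/-- **Convergence time for learning with full memory, uniform-like overlaps.**
The overlaps `a 2, a 3, …` are i.i.d. with values in `[0,1)` and density `g` satisfying
`g(1-t) = c + O(t^δ)` as `t → 0⁺`.  With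
`Nfm n ω = (M(M+1)/(2n(n-1))) ∑_{i=2}^n 1/(1 - aᵢ)`, `M = ⌊(1-Δ)n⌋`, the expected number
of sampling events needed by the learner with full memory to reach probability `1 - Δ`
of finding the correct set, there are constants `0 < C₁' < C₂'` with
`P(C₁' < Nfm/((1-Δ)² n log n) < C₂') → 1` as `n → ∞`. -/
theorem full_memory_learner_time_beta_zero
    {Ω : Type*} [MeasurableSpace Ω] (P : Measure Ω) [IsProbabilityMeasure P]
    (a : ℕ → Ω → ℝ) (hmeas : ∀ i, Measurable (a i))
    (hindep : iIndepFun a P)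
    (hval : ∀ i ω, a i ω ∈ Set.Ico (0 : ℝ) 1)
    (g : ℝ → ℝ)
    (hpdf : ∀ i, Measure.map (a i) P = volume.withDensity (fun t => ENNReal.ofReal (g t)))
    (c δ : ℝ) (hc : 0 < c) (hδ : 0 < δ)
    (hg : (fun t => g (1 - t) - c) =O[nhdsWithin 0 (Set.Ioi 0)] (fun t => t ^ δ))
    (Δ : ℝ) (hΔ : 0 < Δ) (hΔ' : Δ < 1)
    (Nfm : ℕ → Ω → ℝ)
    (hNfm : ∀ n ω, Nfm n ω =
      ((⌊(1 - Δ) * n⌋₊ : ℝ) * ((⌊(1 - Δ) * n⌋₊ : ℝ) + 1) / (2 * n * ((n : ℝ) - 1))) *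
        ∑ i ∈ Finset.Icc 2 n, 1 / (1 - a i ω)) :
    ∃ C₁ C₂ : ℝ, 0 < C₁ ∧ 0 < C₂ ∧
      Tendsto (fun n : ℕ =>
          P {ω | C₁ < Nfm n ω / ((1 - Δ) ^ 2 * n * Real.log n) ∧
                 Nfm n ω / ((1 - Δ) ^ 2 * n * Real.log n) < C₂})
        atTop (nhds 1) := by
  obtain ⟨τ, hτ, hτ1, hgτ⟩ := exists_forall_Ico_one_mem_Icc hc hδ hg
  have hφ : Measurable fun x : ℝ => (1 - x)⁻¹ := (measurable_const.sub measurable_id).inv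
  have htail : ∀ i x, τ⁻¹ ≤ x →
      P.real {ω | x ≤ (1 - a i ω)⁻¹} ∈ Icc (c / 2 / x) (3 * c / 2 / x) := fun i _ hx =>
    measureReal_le_inv_one_sub_mem_Icc (hmeas i) (fun ω => (hval i ω).2) (hpdf i) hτ
      (by positivity) (by positivity) hgτ hx
  have hcard : ∀ᶠ n in atTop, #(Finset.Icc 2 n) ≤ n ∧ n ≤ 2 * #(Finset.Icc 2 n) := by
    filter_upwards [eventually_ge_atTop 2] with n hn
    rw [Nat.card_Icc]
    omega
  have hsum := tendsto_measure_sum_mem_Ioo_mul_log (μ := P) (X := fun i ω => (1 - a i ω)⁻¹)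
    (fun i => hφ.comp (hmeas i)) (fun i ω => inv_nonneg.2 (sub_nonneg.2 (hval i ω).2.le))
    (fun i j hij => (hindep.indepFun hij).comp hφ hφ) (fun i x hx => (htail i x hx).1)
    (fun i x hx => (htail i x hx).2) (by positivity) (by positivity) ((one_le_inv₀ hτ).2 hτ1) hcard
  have hγ : 0 < 1 - Δ := by linarith
  refine ⟨c / 2 / 4 / 8, (1 + 2 * (3 * c / 2) + c / 2) / (1 - Δ), by positivity, by positivity, ?_⟩
  refine tendsto_of_tendsto_of_tendsto_of_le_of_le' hsum tendsto_const_nhds ?_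
    (Eventually.of_forall fun _ => prob_le_one)
  filter_upwards [tendsto_natCast_atTop_atTop.eventually_ge_atTop (2 / (1 - Δ)),
    tendsto_natCast_atTop_atTop.eventually_ge_atTop (1 / Δ),
    (Real.tendsto_log_atTop.comp tendsto_natCast_atTop_atTop).eventually_gt_atTop 0]
    with n h2 h1 hlog
  have hp := floor_mul_coeff_mem_Icc hγ (n := n)
    (by linarith [(div_le_iff₀ hγ).1 h2]) (by linarith [(div_le_iff₀ hΔ).1 h1])
  refine measure_mono fun ω hω => ?_
  have hn : (0 : ℝ) < n := by linarith [div_pos two_pos hγ]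
  have := mul_div_mem_Ioo hγ (by positivity) (by positivity) hp hω
  simpa [hNfm, mul_assoc, one_div] using this
end

section
/- Fix Δ ∈ (0,1) and suppose the common density g of the overlaps satisfies g(1−x) = c·x^β + O(x^{β+δ}) as x → 0⁺ for some constants c, δ, β > 0. Then there exist positive constants c₁′, c₂′ (independent of n) such that lim_{n→∞} P( c₁′ < N_Δ^{fm} / ((1−Δ)²·n) < c₂′ ) = 1. -/
/-!
Near `1` the density of each overlap is `O((1 - x)^β)` with `β > 0`, so `1 / (1 - x)` is
integrable against it and `m = 𝔼[1 / (1 - a₂)]` is finite. By the strong law of large numbers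
`(∑_{i=2}^n 1 / (1 - aᵢ)) / (n - 1) → m` almost surely, and `M (M + 1) / n² → (1 - Δ)²`, so
`N_Δ^{fm} / ((1 - Δ)² n) → m / 2` almost surely; almost sure convergence forces the probability
of lying in `(m / 4, m)` to tend to `1`.
-/

open MeasureTheory ProbabilityTheory Filter Set Topology

lemma isBigO_rpow_of_sub_isBigO_rpow_add {f : ℝ → ℝ} {c β δ : ℝ} (hδ : 0 ≤ δ)
    (h : (fun t => f t - c * t ^ β) =O[𝓝[>] 0] fun t => t ^ (β + δ)) :
    f =O[𝓝[>] 0] fun t => t ^ β := by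
  have hsmall : (fun t : ℝ => t ^ (β + δ)) =O[𝓝[>] 0] fun t => t ^ β := by
    refine Asymptotics.IsBigO.of_bound 1 ?_
    filter_upwards [Ioo_mem_nhdsGT zero_lt_one] with t ht
    rw [one_mul, Real.norm_of_nonneg (Real.rpow_nonneg ht.1.le _),
      Real.norm_of_nonneg (Real.rpow_nonneg ht.1.le _)]
    exact Real.rpow_le_rpow_of_exponent_ge ht.1 ht.2.le (by linarith)
  simpa using (h.trans hsmall).add ((Asymptotics.isBigO_refl _ _).const_mul_left c)

lemma lintegral_ofReal_inv_one_sub_lt_top {ν : Measure ℝ} [IsFiniteMeasure ν] {K β t₀ : ℝ}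
    (hβ : 0 < β) (ht₀ : 0 < t₀)
    (hν : ν.restrict (Ioo (1 - t₀) 1) ≤
      (volume.restrict (Ioo (1 - t₀) 1)).withDensity fun x => ENNReal.ofReal (K * (1 - x) ^ β)) :
    ∫⁻ x, ENNReal.ofReal (1 - x)⁻¹ ∂ν < ⊤ := by
  rw [← lintegral_add_compl _ (measurableSet_Ioo (a := 1 - t₀) (b := 1))]
  refine ENNReal.add_lt_top.2 ⟨?_, ?_⟩
  · have hint : IntegrableOn (fun x : ℝ => K * (1 - x) ^ (β - 1)) (Ioo (1 - t₀) 1) := by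
      have h := ((intervalIntegral.intervalIntegrable_rpow' (a := 0) (b := t₀)
        (show -1 < β - 1 by linarith)).comp_sub_left 1).const_mul K
      rw [intervalIntegrable_iff, sub_zero, uIoc_of_ge (by linarith)] at h
      exact h.mono_set Ioo_subset_Ioc_self
    calc ∫⁻ x in Ioo (1 - t₀) 1, ENNReal.ofReal (1 - x)⁻¹ ∂ν
        ≤ ∫⁻ x, ENNReal.ofReal (1 - x)⁻¹ ∂(volume.restrict (Ioo (1 - t₀) 1)).withDensity
            fun x => ENNReal.ofReal (K * (1 - x) ^ β) := lintegral_mono' hν le_rfl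
      _ = ∫⁻ x in Ioo (1 - t₀) 1, ENNReal.ofReal (K * (1 - x) ^ (β - 1)) := by
        rw [lintegral_withDensity_eq_lintegral_mul _ (by fun_prop) (by fun_prop)]
        refine setLIntegral_congr_fun measurableSet_Ioo fun x hx => ?_
        have hx : 0 < 1 - x := by linarith [hx.2]
        rw [Pi.mul_apply, ← ENNReal.ofReal_mul' (inv_nonneg.2 hx.le), Real.rpow_sub hx,
          Real.rpow_one]
        ring_nf
      _ < ⊤ := hint.lintegral_lt_top
  · calc ∫⁻ x in (Ioo (1 - t₀) 1)ᶜ, ENNReal.ofReal (1 - x)⁻¹ ∂ν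
        ≤ ∫⁻ _ in (Ioo (1 - t₀) 1)ᶜ, ENNReal.ofReal t₀⁻¹ ∂ν := by
          refine setLIntegral_mono measurable_const fun x hx => ENNReal.ofReal_le_ofReal ?_
          rcases le_or_gt x (1 - t₀) with hx' | hx'
          · exact inv_anti₀ ht₀ (by linarith)
          · -- beyond `1` the integrand is `(1 - x)⁻¹ ≤ 0` (with `0⁻¹ = 0` at `x = 1`)
            have hx1 : 1 ≤ x := not_lt.1 fun h => hx ⟨hx', h⟩
            exact (inv_nonpos.2 (by linarith)).trans (inv_nonneg.2 ht₀.le)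
      _ < ⊤ := by
        rw [setLIntegral_const]
        exact ENNReal.mul_lt_top ENNReal.ofReal_lt_top (measure_lt_top _ _)

lemma integrable_inv_one_sub_of_density_isBigO {Ω : Type*} [MeasurableSpace Ω] {P : Measure Ω}
    [IsProbabilityMeasure P] {Y : Ω → ℝ} (hY : Measurable Y) (hY1 : ∀ ω, Y ω < 1) {g : ℝ → ℝ}
    (hpdf : Measure.map Y P = volume.withDensity fun t => ENNReal.ofReal (g t)) {β : ℝ}
    (hβ : 0 < β) (hg : (fun t => g (1 - t)) =O[𝓝[>] 0] fun t => t ^ β) :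
    Integrable (fun ω => (1 - Y ω)⁻¹) P := by
  -- `g` need not be measurable, so it is only ever compared with a measurable majorant.
  obtain ⟨K, hK⟩ := hg.bound
  obtain ⟨t₀, ht₀, hsub⟩ := mem_nhdsGT_iff_exists_Ioo_subset.1 hK
  have hdens : ∀ x ∈ Ioo (1 - t₀) 1, g x ≤ K * (1 - x) ^ β := by
    intro x hx
    have hmem : 1 - x ∈ Ioo 0 t₀ := ⟨by linarith [hx.2], by linarith [hx.1]⟩
    have h := hsub hmem
    rw [mem_ofPred_eq, sub_sub_cancel, Real.norm_of_nonneg (Real.rpow_nonneg hmem.1.le _)] at h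
    exact (Real.le_norm_self _).trans h
  have hν : (Measure.map Y P).restrict (Ioo (1 - t₀) 1) ≤
      (volume.restrict (Ioo (1 - t₀) 1)).withDensity
        fun x => ENNReal.ofReal (K * (1 - x) ^ β) := by
    rw [hpdf, restrict_withDensity measurableSet_Ioo]
    exact withDensity_mono (ae_restrict_of_forall_mem measurableSet_Ioo
      fun x hx => ENNReal.ofReal_le_ofReal (hdens x hx))
  have hpos : ∀ ω, 0 ≤ (1 - Y ω)⁻¹ := fun ω => inv_nonneg.2 (by linarith [hY1 ω])
  refine ⟨by fun_prop, (hasFiniteIntegral_iff_ofReal (ae_of_all _ hpos)).2 ?_⟩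
  rw [← lintegral_map (f := fun x => ENNReal.ofReal (1 - x)⁻¹) (by fun_prop) hY]
  exact lintegral_ofReal_inv_one_sub_lt_top hβ ht₀ hν

lemma ae_tendsto_average_comp_of_iIndepFun {Ω : Type*} [MeasurableSpace Ω] {P : Measure Ω}
    {a : ℕ → Ω → ℝ} (hindep : iIndepFun a P) (hident : ∀ i, IdentDistrib (a i) (a 0) P P)
    {f : ℝ → ℝ} (hf : Measurable f) (hint : Integrable (fun ω => f (a 0 ω)) P) :
    ∀ᵐ ω ∂P, Tendsto (fun n : ℕ => (∑ i ∈ Finset.range n, f (a i ω)) / n) atTop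
      (𝓝 (∫ ω, f (a 0 ω) ∂P)) :=
  strong_law_ae_real (fun i => f ∘ a i) hint
    (fun _ _ hij => (hindep.indepFun hij).comp hf hf) fun i => (hident i).comp hf

lemma tendsto_nat_floor_mul_mul_add_one_div_sq {r : ℝ} (hr : 0 ≤ r) :
    Tendsto (fun n : ℕ => (⌊r * n⌋₊ : ℝ) * (⌊r * n⌋₊ + 1) / n ^ 2) atTop (𝓝 (r ^ 2)) := by
  have hfloor : Tendsto (fun n : ℕ => (⌊r * n⌋₊ : ℝ) / n) atTop (𝓝 r) :=
    (tendsto_nat_floor_mul_div_atTop hr).comp tendsto_natCast_atTop_atTop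
  have hfloor' : Tendsto (fun n : ℕ => ((⌊r * n⌋₊ : ℝ) + 1) / n) atTop (𝓝 r) := by
    simpa [add_div] using hfloor.add tendsto_one_div_atTop_nhds_zero_nat
  simpa [sq, mul_div_mul_comm] using hfloor.mul hfloor'

lemma tendsto_nat_floor_mul_sum_Icc_div {r m : ℝ} (hr : 0 < r) {x : ℕ → ℝ}
    (hx : Tendsto (fun n : ℕ => (∑ i ∈ Finset.range n, x (i + 2)) / n) atTop (𝓝 m)) :
    Tendsto (fun n : ℕ => (⌊r * n⌋₊ : ℝ) * (⌊r * n⌋₊ + 1) / (2 * n * ((n : ℝ) - 1)) *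
        (∑ i ∈ Finset.Icc 2 n, x i) / (r ^ 2 * n)) atTop (𝓝 (m / 2)) := by
  have hshift : Tendsto (fun n : ℕ => (∑ i ∈ Finset.range (n - 1), x (i + 2)) / ((n : ℝ) - 1))
      atTop (𝓝 m) := by
    refine (hx.comp (tendsto_sub_atTop_nat 1)).congr' ?_
    filter_upwards [eventually_ge_atTop 1] with n hn
    simp [Nat.cast_sub hn]
  have h := ((tendsto_nat_floor_mul_mul_add_one_div_sq hr.le).div_const (2 * r ^ 2)).mul hshift
  rw [show r ^ 2 / (2 * r ^ 2) * m = m / 2 by field_simp] at h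
  refine h.congr' ?_
  filter_upwards [eventually_ge_atTop 2] with n hn
  have hn' : (2 : ℝ) ≤ n := mod_cast hn
  rw [← Finset.Ico_add_one_right_eq_Icc, Finset.sum_Ico_eq_sum_range,
    show n + 1 - 2 = n - 1 by omega]
  simp_rw [add_comm 2]
  field_simp

lemma tendsto_measure_preimage_of_ae_tendsto {Ω E : Type*} [MeasurableSpace Ω] {P : Measure Ω}
    [IsProbabilityMeasure P] [TopologicalSpace E] [MeasurableSpace E] [OpensMeasurableSpace E]
    {R : ℕ → Ω → E} (hR : ∀ n, Measurable (R n)) {U : Set E} (hU : IsOpen U) {L : E} (hL : L ∈ U)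
    (h : ∀ᵐ ω ∂P, Tendsto (fun n => R n ω) atTop (𝓝 L)) :
    Tendsto (fun n => P (R n ⁻¹' U)) atTop (𝓝 1) := by
  simpa using tendsto_measure_of_ae_tendsto_indicator_of_isFiniteMeasure atTop
    MeasurableSet.univ (fun n => hR n hU.measurableSet)
    (h.mono fun ω hω => (hω.eventually_mem (hU.mem_nhds hL)).mono fun n hn => by simpa using hn)

theorem full_memory_learner_time_beta_pos_general
    {Ω : Type*} [MeasurableSpace Ω] (P : Measure Ω) [IsProbabilityMeasure P]
    (a : ℕ → Ω → ℝ) (hmeas : ∀ i, Measurable (a i))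
    (hindep : iIndepFun a P)
    (hval : ∀ i ω, a i ω ∈ Set.Ico (0 : ℝ) 1)
    (g : ℝ → ℝ)
    (hpdf : ∀ i, Measure.map (a i) P = volume.withDensity (fun t => ENNReal.ofReal (g t)))
    (c δ β : ℝ) (hδ : 0 < δ) (hβ : 0 < β)
    (hg : (fun t => g (1 - t) - c * t ^ β) =O[nhdsWithin 0 (Set.Ioi 0)] (fun t => t ^ (β + δ)))
    (Δ : ℝ) (hΔ' : Δ < 1)
    (Nfm : ℕ → Ω → ℝ)
    (hNfm : ∀ n ω, Nfm n ω =
      ((⌊(1 - Δ) * n⌋₊ : ℝ) * ((⌊(1 - Δ) * n⌋₊ : ℝ) + 1) / (2 * n * ((n : ℝ) - 1))) *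
        ∑ i ∈ Finset.Icc 2 n, 1 / (1 - a i ω)) :
    ∃ C₁ C₂ : ℝ, 0 < C₁ ∧ 0 < C₂ ∧
      Tendsto (fun n : ℕ =>
          P {ω | C₁ < Nfm n ω / ((1 - Δ) ^ 2 * n) ∧
                 Nfm n ω / ((1 - Δ) ^ 2 * n) < C₂})
        atTop (nhds 1) := by
  have hint : Integrable (fun ω => 1 / (1 - a 2 ω)) P := by
    simpa only [one_div] using integrable_inv_one_sub_of_density_isBigO (hmeas 2)
      (fun ω => (hval 2 ω).2) (hpdf 2) hβ (isBigO_rpow_of_sub_isBigO_rpow_add hδ.le hg)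
  have hident : ∀ i, IdentDistrib (a (i + 2)) (a 2) P P := fun i =>
    ⟨(hmeas _).aemeasurable, (hmeas _).aemeasurable, by rw [hpdf, hpdf]⟩
  have hLLN := ae_tendsto_average_comp_of_iIndepFun
    (f := fun x => 1 / (1 - x)) (hindep.precomp (add_left_injective 2)) hident (by fun_prop) hint
  have hm : 1 ≤ ∫ ω, 1 / (1 - a 2 ω) ∂P := by
    simpa using integral_mono (integrable_const 1) hint fun ω =>
      one_le_one_div (by linarith [(hval 2 ω).2]) (by linarith [(hval 2 ω).1])
  set m := ∫ ω, 1 / (1 - a 2 ω) ∂P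
  have hconv : ∀ᵐ ω ∂P, Tendsto (fun n : ℕ => Nfm n ω / ((1 - Δ) ^ 2 * n)) atTop (𝓝 (m / 2)) :=
    hLLN.mono fun ω hω => by
      simp only [hNfm]
      exact tendsto_nat_floor_mul_sum_Icc_div (x := fun i => 1 / (1 - a i ω)) (sub_pos.2 hΔ') hω
  have hmeasN : ∀ n, Measurable fun ω => Nfm n ω / ((1 - Δ) ^ 2 * n) := fun n => by
    simp only [hNfm]
    fun_prop
  exact ⟨m / 4, m, by positivity, by positivity, tendsto_measure_preimage_of_ae_tendsto hmeasN
    isOpen_Ioo (show m / 2 ∈ Ioo (m / 4) m from ⟨by linarith, by linarith⟩) hconv⟩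

/-- **Convergence time for learning with full memory, case `β > 0`.**
The overlaps `a 2, a 3, …` are i.i.d. with values in `[0,1)` and density `g` satisfying
`g(1-t) = c t^β + O(t^{β+δ})` as `t → 0⁺` with `c, δ, β > 0`.  With
`Nfm n ω = (M(M+1)/(2n(n-1))) ∑_{i=2}^n 1/(1 - aᵢ)`, `M = ⌊(1-Δ)n⌋`, the expected number
of sampling events needed by the learner with full memory to reach probability `1 - Δ`
of finding the correct set, there are constants `0 < c₁' < c₂'` with
`P(c₁' < Nfm/((1-Δ)² n) < c₂') → 1` as `n → ∞`. -/
theorem full_memory_learner_time_beta_pos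
    {Ω : Type*} [MeasurableSpace Ω] (P : Measure Ω) [IsProbabilityMeasure P]
    (a : ℕ → Ω → ℝ) (hmeas : ∀ i, Measurable (a i))
    (hindep : iIndepFun a P)
    (hval : ∀ i ω, a i ω ∈ Set.Ico (0 : ℝ) 1)
    (g : ℝ → ℝ)
    (hpdf : ∀ i, Measure.map (a i) P = volume.withDensity (fun t => ENNReal.ofReal (g t)))
    (c δ β : ℝ) (hc : 0 < c) (hδ : 0 < δ) (hβ : 0 < β)
    (hg : (fun t => g (1 - t) - c * t ^ β) =O[nhdsWithin 0 (Set.Ioi 0)] (fun t => t ^ (β + δ)))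
    (Δ : ℝ) (hΔ : 0 < Δ) (hΔ' : Δ < 1)
    (Nfm : ℕ → Ω → ℝ)
    (hNfm : ∀ n ω, Nfm n ω =
      ((⌊(1 - Δ) * n⌋₊ : ℝ) * ((⌊(1 - Δ) * n⌋₊ : ℝ) + 1) / (2 * n * ((n : ℝ) - 1))) *
        ∑ i ∈ Finset.Icc 2 n, 1 / (1 - a i ω)) :
    ∃ C₁ C₂ : ℝ, 0 < C₁ ∧ 0 < C₂ ∧
      Tendsto (fun n : ℕ =>
          P {ω | C₁ < Nfm n ω / ((1 - Δ) ^ 2 * n) ∧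
                 Nfm n ω / ((1 - Δ) ^ 2 * n) < C₂})
        atTop (nhds 1) :=
  full_memory_learner_time_beta_pos_general P a hmeas hindep hval g hpdf c δ β hδ hβ hg Δ hΔ' Nfm
    hNfm
end
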